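/- arXiv:1803.00908 — 5 statements merged into one kernel-verified Lean document; each statement's English description precedes it below -/
import Mathlib

section
/- Let k be a positive integer and let G be a loopless multigraph with maximum degree at most k and maximum edge multiplicity at most μ. Suppose there is a vertex x such that every vertex of G other than x has degree at most k − t, where t ≥ max{2, μ}. Then χ'(G) ≤ k. -/
/-!
Induction on the number of edges. Delete one copy of an edge `uv`, with `u = x` unless `x` is
isolated, and colour the rest: this colours `G` except for one copy of `uv`. If that colouring
cannot be completed, Vizing's fan argument applies. Call `w` a fan vertex if it is reached from
`v` by distinct colours `βᵢ`, each missing at the previous vertex and lying on an edge `u zᵢ`.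
Shifting colours along such a sequence shows that no colour is missing both at `u` and at a fan
vertex, and swapping a Kempe chain then shows that fan vertices miss pairwise disjoint sets of
colours. A fan vertex misses at least `t` colours, each on an edge from `u` into the fan `W`;
but as multiplicities are at most `t`, fewer than `t·|W|` such edges are coloured.
-/

open Finset Filter Asymptotics

namespace GS

variable {V : Type*}

/-- A loopless multigraph on `V`, given by a symmetric multiplicity function
with zero diagonal. -/
def IsMultigraph (G : V → V → ℕ) : Prop :=
  (∀ u v, G u v = G v u) ∧ ∀ v, G v v = 0

/-- The degree of a vertex (edges counted with multiplicity). -/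
def mdeg [Fintype V] (G : V → V → ℕ) (v : V) : ℕ := ∑ u, G v u

/-- The maximum degree `Δ(G)`. -/
def maxDeg [Fintype V] (G : V → V → ℕ) : ℕ := Finset.univ.sup (mdeg G)

/-- The number of edges (with multiplicity) with both endpoints in `S`. -/
def edgesIn [DecidableEq V] (G : V → V → ℕ) (S : Finset V) : ℕ :=
  (∑ v ∈ S, ∑ u ∈ S, G v u) / 2

/-- A proper `k`-edge-colouring: every copy of an edge gets a colour
(`(c u v).card = G u v`), symmetric, and edge copies sharing a vertex get
distinct colours. -/
def IsProperEdgeColoring [Fintype V] (G : V → V → ℕ) (k : ℕ)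
    (c : V → V → Finset (Fin k)) : Prop :=
  (∀ u v, c u v = c v u) ∧ (∀ u v, (c u v).card = G u v) ∧
    ∀ v u w, u ≠ w → Disjoint (c v u) (c v w)

/-- `G` admits a proper `k`-edge-colouring. -/
def Colorable [Fintype V] (G : V → V → ℕ) (k : ℕ) : Prop :=
  ∃ c : V → V → Finset (Fin k), IsProperEdgeColoring G k c

/-- The chromatic index `χ'(G)`. -/
noncomputable def chromIndex [Fintype V] (G : V → V → ℕ) : ℕ :=
  sInf {k | Colorable G k}

/-- `ρ(S) = e(G[S]) / ⌊|S|/2⌋`. -/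
noncomputable def rhoS [DecidableEq V] (G : V → V → ℕ) (S : Finset V) : ℝ :=
  (edgesIn G S : ℝ) / ((S.card / 2 : ℕ) : ℝ)

/-- `ρ(G)`, the maximum of `ρ(S)` over all `S` with `|S| ≥ 2`. -/
noncomputable def rho [Fintype V] [DecidableEq V] (G : V → V → ℕ) : ℝ :=
  sSup {r : ℝ | ∃ S : Finset V, 2 ≤ S.card ∧ r = rhoS G S}

/-- The maximum edge multiplicity `μ(G)`. -/
def muMax [Fintype V] [DecidableEq V] (G : V → V → ℕ) : ℕ :=
  Finset.univ.sup fun p : V × V => if p.1 = p.2 then 0 else G p.1 p.2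

/-- The minimum edge multiplicity `μ_min(G)` (over pairs of distinct vertices). -/
noncomputable def muMin (G : V → V → ℕ) : ℕ :=
  sInf {t | ∃ u v : V, u ≠ v ∧ G u v = t}

/-- The second largest degree `d₂`. -/
def secondDeg [Fintype V] [DecidableEq V] (G : V → V → ℕ) : ℕ :=
  Finset.univ.sup fun p : V × V => if p.1 = p.2 then 0 else min (mdeg G p.1) (mdeg G p.2)

/-- Unordered pairs of distinct vertices of `[n]`. -/
abbrev NDPair (n : ℕ) := {p : Sym2 (Fin n) // ¬ p.IsDiag}

/-- An outcome of the random multigraph process `M(n,m)`: a choice of one of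
the pairs for each of the `m` rounds. -/
abbrev MGOutcome (n m : ℕ) := Fin m → NDPair n

/-- The multiplicity function of the multigraph produced by an outcome. -/
def mgGraph {n m : ℕ} (ω : MGOutcome n m) : Fin n → Fin n → ℕ := fun u v =>
  (Finset.univ.filter fun i => (ω i : Sym2 (Fin n)) = s(u, v)).card

/-- The number of times the pair `p` was chosen. -/
def pairCount {n m : ℕ} (ω : MGOutcome n m) (p : NDPair n) : ℕ :=
  (Finset.univ.filter fun i => ω i = p).card

/-- The probability, under the uniform measure `M(n,m)`, of the event `P`. -/
noncomputable def mgProb (n m : ℕ) (P : MGOutcome n m → Prop) : ℝ :=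
  (Nat.card {ω : MGOutcome n m // P ω} : ℝ) / (Nat.card (MGOutcome n m) : ℝ)

end GS

open GS Filter

namespace GS

section Colourings

variable {V : Type*} {k : ℕ}

structure IsProper (c : V → V → Finset (Fin k)) : Prop where
  symm : ∀ a b, c a b = c b a
  disjoint : ∀ z w w', w ≠ w' → Disjoint (c z w) (c z w')

theorem IsProper.eq_of_mem {c : V → V → Finset (Fin k)} (hc : IsProper c) {z w w' : V}
    {δ : Fin k} (h : δ ∈ c z w) (h' : δ ∈ c z w') : w = w' :=
  by_contra fun hne => Finset.disjoint_left.mp (hc.disjoint z w w' hne) h h'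

section Missing

variable [Fintype V]

def missing (c : V → V → Finset (Fin k)) (z : V) : Finset (Fin k) :=
  univ.filter fun δ => ∀ w, δ ∉ c z w

@[simp]
theorem mem_missing {c : V → V → Finset (Fin k)} {z : V} {δ : Fin k} :
    δ ∈ missing c z ↔ ∀ w, δ ∉ c z w := by
  simp [missing]

theorem mem_missing_congr {c c' : V → V → Finset (Fin k)} {δ : Fin k}
    (h : ∀ a b, δ ∈ c a b ↔ δ ∈ c' a b) (z : V) : δ ∈ missing c z ↔ δ ∈ missing c' z := by
  simp only [mem_missing, h]

theorem le_card_missing_add_sum_card [DecidableEq V] (c : V → V → Finset (Fin k)) (z : V) :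
    k ≤ #(missing c z) + ∑ w, #(c z w) := by
  have hcover : (univ : Finset (Fin k)) ⊆ missing c z ∪ univ.biUnion (c z) := by
    intro δ _
    by_cases hδ : δ ∈ missing c z
    · exact mem_union_left _ hδ
    · obtain ⟨w, hw⟩ : ∃ w, δ ∈ c z w := by simpa using hδ
      exact mem_union_right _ (mem_biUnion.mpr ⟨w, mem_univ w, hw⟩)
  calc k = #(univ : Finset (Fin k)) := (card_fin k).symm
    _ ≤ #(missing c z ∪ univ.biUnion (c z)) := card_le_card hcover
    _ ≤ #(missing c z) + #(univ.biUnion (c z)) := card_union_le _ _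
    _ ≤ #(missing c z) + ∑ w, #(c z w) := Nat.add_le_add_left card_biUnion_le _

end Missing

section UpdateEdge

variable [DecidableEq V]

def updateEdge (c : V → V → Finset (Fin k)) (u r : V) (f : Finset (Fin k) → Finset (Fin k)) :
    V → V → Finset (Fin k) :=
  fun a b => if s(a, b) = s(u, r) then f (c a b) else c a b

variable {c : V → V → Finset (Fin k)} {u r : V} {f : Finset (Fin k) → Finset (Fin k)}

theorem updateEdge_symm (hc : ∀ a b, c a b = c b a) (a b : V) :
    updateEdge c u r f a b = updateEdge c u r f b a := by
  simp only [updateEdge, Sym2.eq_swap (a := a), hc a b]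

theorem mem_updateEdge_iff_of_forall {δ : Fin k} (hf : ∀ s, δ ∈ f s ↔ δ ∈ s) (a b : V) :
    δ ∈ updateEdge c u r f a b ↔ δ ∈ c a b := by
  unfold updateEdge
  split_ifs
  exacts [hf _, Iff.rfl]

theorem IsProper.updateEdge_of_subset (hc : IsProper c) (hf : ∀ s, f s ⊆ s) :
    IsProper (updateEdge c u r f) where
  symm := updateEdge_symm hc.symm
  disjoint z w w' hww' := by
    have hsub : ∀ w, updateEdge c u r f z w ⊆ c z w := fun w => by
      unfold updateEdge; split_ifs; exacts [hf _, subset_rfl]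
    exact (hc.disjoint z w w' hww').mono (hsub w) (hsub w')

theorem missing_subset_missing_updateEdge [Fintype V] (hf : ∀ s, f s ⊆ s) (z : V) :
    missing c z ⊆ missing (updateEdge c u r f) z := by
  intro δ hδ
  simp only [mem_missing, updateEdge] at hδ ⊢
  intro w
  split_ifs
  exacts [fun h => hδ w (hf _ h), hδ w]

theorem mem_missing_updateEdge_erase [Fintype V] (hc : IsProper c) {β : Fin k} {z : V}
    (hβ : β ∈ c u z) : β ∈ missing (updateEdge c u z (·.erase β)) u := by
  simp only [mem_missing, updateEdge]
  intro w
  split_ifs with h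
  · exact notMem_erase β _
  · exact fun hw => h (by rw [hc.eq_of_mem hw hβ])

theorem mem_updateEdge_insert {δ γ : Fin k} {a b : V} :
    γ ∈ updateEdge c u r (insert δ) a b ↔ γ ∈ c a b ∨ (γ = δ ∧ s(a, b) = s(u, r)) := by
  unfold updateEdge
  split_ifs with h <;> simp [h, or_comm]

theorem IsProper.updateEdge_insert [Fintype V] (hc : IsProper c) {δ : Fin k}
    (hu : δ ∈ missing c u) (hr : δ ∈ missing c r) : IsProper (updateEdge c u r (insert δ)) where
  symm := updateEdge_symm hc.symm
  disjoint y w w' hww' := by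
    have hy : ∀ {x}, s(y, x) = s(u, r) → ∀ w', δ ∉ c y w' := fun {x} h => by
      rcases Sym2.mem_iff.mp (h ▸ Sym2.mem_mk_left y x) with rfl | rfl
      exacts [mem_missing.mp hu, mem_missing.mp hr]
    refine Finset.disjoint_left.mpr fun γ hγ hγ' => ?_
    rw [mem_updateEdge_insert] at hγ hγ'
    rcases hγ with hγ | ⟨rfl, h⟩ <;> rcases hγ' with hγ' | ⟨hγδ, h'⟩
    · exact hww' (hc.eq_of_mem hγ hγ')
    · exact hy h' w (hγδ ▸ hγ)
    · exact hy h w' hγ'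
    · exact hww' (Sym2.congr_right.mp (h.trans h'.symm))

end UpdateEdge

section NearColoring

variable [DecidableEq V] {H : V → V → ℕ} {u r : V} {c : V → V → Finset (Fin k)}

/-- `c` properly colours `H` except for one copy of the edge `ur`, which is left uncoloured. -/
structure IsNearColoring (H : V → V → ℕ) (u r : V) (c : V → V → Finset (Fin k)) : Prop
    extends IsProper c where
  card_add : ∀ a b, #(c a b) + (if s(a, b) = s(u, r) then 1 else 0) = H a b

theorem IsNearColoring.apply_self_eq_empty (hc : IsNearColoring H u r c) (hH : ∀ a, H a a = 0) :
    c u u = ∅ := by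
  have := hc.card_add u u
  rw [hH] at this
  exact card_eq_zero.mp (by omega)

theorem IsNearColoring.ne (hc : IsNearColoring H u r c) (hH : ∀ a, H a a = 0) : r ≠ u := by
  rintro rfl
  have := hc.card_add r r
  rw [hH, if_pos rfl] at this
  omega

variable [Fintype V]

theorem IsNearColoring.colorable_of_mem_missing (hc : IsNearColoring H u r c) {δ : Fin k}
    (hu : δ ∈ missing c u) (hr : δ ∈ missing c r) : Colorable H k := by
  have hproper := hc.updateEdge_insert hu hr
  refine ⟨updateEdge c u r (insert δ), hproper.symm, fun a b => ?_, hproper.disjoint⟩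
  have hcard := hc.card_add a b
  unfold updateEdge
  split_ifs at hcard ⊢ with h
  · obtain ⟨rfl, rfl⟩ | ⟨rfl, rfl⟩ := Sym2.eq_iff.mp h
    · rw [card_insert_of_notMem (mem_missing.mp hu b), hcard]
    · rw [card_insert_of_notMem (mem_missing.mp hr b), hcard]
  · exact hcard

/-- Shifting the colour `β` from a copy of `uz` to the uncoloured copy of `ur`. -/
theorem IsNearColoring.exists_shift (hc : IsNearColoring H u r c) {β : Fin k} {z : V}
    (hβr : β ∈ missing c r) (hβz : β ∈ c u z) :
    ∃ c', IsNearColoring H u z c' ∧ ∀ δ ≠ β, ∀ a b, δ ∈ c' a b ↔ δ ∈ c a b := by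
  set c₁ := updateEdge c u z (·.erase β)
  have hβ : ∀ {a b}, s(a, b) = s(u, r) → β ∉ c a b := fun h => by
    obtain ⟨rfl, rfl⟩ | ⟨rfl, rfl⟩ := Sym2.eq_iff.mp h
    · rw [hc.symm]; exact mem_missing.mp hβr _
    · exact mem_missing.mp hβr _
  have hzr : s(u, z) ≠ s(u, r) := fun h => hβ h hβz
  have hproper₁ : IsProper c₁ := hc.updateEdge_of_subset fun _ => erase_subset _ _
  refine ⟨updateEdge c₁ u r (insert β), ⟨hproper₁.updateEdge_insert
    (mem_missing_updateEdge_erase hc.toIsProper hβz)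
    (missing_subset_missing_updateEdge (fun _ => erase_subset _ _) r hβr), fun a b => ?_⟩,
    fun δ hδ a b => ?_⟩
  · have hcard := hc.card_add a b
    simp only [updateEdge, c₁]
    by_cases h : s(a, b) = s(u, r)
    · rw [if_pos h, if_neg (h ▸ hzr.symm), if_neg (h ▸ hzr.symm), card_insert_of_notMem (hβ h)]
      rwa [if_pos h] at hcard
    · rw [if_neg h] at hcard ⊢
      split_ifs with h'
      · have hβab : β ∈ c a b := by
          obtain ⟨rfl, rfl⟩ | ⟨rfl, rfl⟩ := Sym2.eq_iff.mp h'
          exacts [hβz, hc.symm a b ▸ hβz]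
        rw [card_erase_of_mem hβab]
        have := card_pos.mpr ⟨β, hβab⟩
        omega
      · exact hcard
  · rw [mem_updateEdge_iff_of_forall (fun s => by simp [hδ]),
      mem_updateEdge_iff_of_forall (fun s => by simp [hδ])]

theorem IsNearColoring.sum_card_le (hc : IsNearColoring H u r c) (z : V) :
    ∑ w, #(c z w) ≤ mdeg H z :=
  sum_le_sum fun w _ => (Nat.le_add_right _ _).trans (hc.card_add z w).le

theorem IsNearColoring.sum_card_add_one (hc : IsNearColoring H u r c) :
    ∑ w, #(c u w) + 1 = mdeg H u := by
  have h := sum_congr rfl fun w (_ : w ∈ univ) => hc.card_add u w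
  simp only [sum_add_distrib, Sym2.congr_right, sum_ite_eq', mem_univ, if_true] at h
  exact h

theorem IsNearColoring.nonempty_missing (hc : IsNearColoring H u r c) (hu : mdeg H u ≤ k) :
    (missing c u).Nonempty := by
  have := le_card_missing_add_sum_card c u
  have := hc.sum_card_add_one
  exact card_pos.mp (by omega)

theorem IsNearColoring.le_card_missing (hc : IsNearColoring H u r c) {t : ℕ} {z : V}
    (hz : mdeg H z + t ≤ k) : t ≤ #(missing c z) := by
  have := le_card_missing_add_sum_card c z
  have := hc.sum_card_le z
  omega

end NearColoring

section FanChain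

def chainEnd {α : Type*} (r : V) (L : List (α × V)) : V :=
  L.foldl (fun _ p => p.2) r

@[simp]
theorem chainEnd_nil {α : Type*} (r : V) : chainEnd r ([] : List (α × V)) = r := rfl

@[simp]
theorem chainEnd_cons {α : Type*} (r : V) (p : α × V) (L : List (α × V)) :
    chainEnd r (p :: L) = chainEnd p.2 L := rfl

theorem chainEnd_append {α : Type*} (r : V) (L₁ L₂ : List (α × V)) :
    chainEnd r (L₁ ++ L₂) = chainEnd (chainEnd r L₁) L₂ :=
  List.foldl_append

variable [Fintype V] {c c' : V → V → Finset (Fin k)} {u : V}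

/-- `[(β₁, z₁), …, (βₙ, zₙ)]` is a fan chain at `u` from `z₀ = r`: each `βᵢ` is missing at
`zᵢ₋₁` and lies on an edge `u zᵢ`. -/
def IsFanChain (c : V → V → Finset (Fin k)) (u : V) : V → List (Fin k × V) → Prop
  | _, [] => True
  | r, (β, z) :: L => β ∈ missing c r ∧ β ∈ c u z ∧ IsFanChain c u z L

theorem isFanChain_append {r : V} {L₁ L₂ : List (Fin k × V)} :
    IsFanChain c u r (L₁ ++ L₂) ↔ IsFanChain c u r L₁ ∧ IsFanChain c u (chainEnd r L₁) L₂ := by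
  induction L₁ generalizing r with
  | nil => simp [IsFanChain]
  | cons p L₁ ih => simp only [List.cons_append, IsFanChain, ih, chainEnd_cons, and_assoc]

theorem IsFanChain.mem {r : V} {L : List (Fin k × V)} (hL : IsFanChain c u r L) :
    ∀ p ∈ L, p.1 ∈ c u p.2 := by
  induction L generalizing r with
  | nil => simp
  | cons p L ih =>
    obtain ⟨β, z⟩ := p
    intro q hq
    rcases List.mem_cons.mp hq with rfl | hq
    exacts [hL.2.1, ih hL.2.2 q hq]

theorem IsFanChain.congr {r : V} {L : List (Fin k × V)} (hL : IsFanChain c u r L)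
    (h : ∀ p ∈ L, ∀ a b, p.1 ∈ c a b ↔ p.1 ∈ c' a b) : IsFanChain c' u r L := by
  induction L generalizing r with
  | nil => trivial
  | cons p L ih =>
    obtain ⟨β, z⟩ := p
    refine ⟨(mem_missing_congr (h (β, z) (by simp)) r).mp hL.1, (h (β, z) (by simp) u z).mp hL.2.1,
      ih hL.2.2 fun q hq => h q (by simp [hq])⟩

theorem IsFanChain.chainEnd_ne (hu : c u u = ∅) {r : V} {L : List (Fin k × V)}
    (hL : IsFanChain c u r L) (hr : r ≠ u) : chainEnd r L ≠ u := by
  induction L generalizing r with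
  | nil => exact hr
  | cons p L ih =>
    obtain ⟨β, z⟩ := p
    refine ih hL.2.2 fun (hp : z = u) => ?_
    have := hL.2.1
    rw [hp, hu] at this
    exact notMem_empty _ this

open Classical in
noncomputable def fan (c : V → V → Finset (Fin k)) (u r : V) : Finset V :=
  univ.filter fun w => ∃ L : List (Fin k × V),
    IsFanChain c u r L ∧ (L.map Prod.fst).Nodup ∧ chainEnd r L = w

theorem mem_fan {r w : V} : w ∈ fan c u r ↔ ∃ L : List (Fin k × V),
    IsFanChain c u r L ∧ (L.map Prod.fst).Nodup ∧ chainEnd r L = w := by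
  simp [fan]

theorem start_mem_fan (r : V) : r ∈ fan c u r :=
  mem_fan.mpr ⟨[], trivial, List.nodup_nil, rfl⟩

variable [DecidableEq V] {H : V → V → ℕ}

theorem IsNearColoring.disjoint_missing_chainEnd (hH : ¬ Colorable H k)
    {L : List (Fin k × V)} {r : V} (hc : IsNearColoring H u r c) (hL : IsFanChain c u r L)
    (hnd : (L.map Prod.fst).Nodup) : Disjoint (missing c u) (missing c (chainEnd r L)) := by
  induction L generalizing c r with
  | nil => exact disjoint_left.mpr fun δ hu hr => hH (hc.colorable_of_mem_missing hu hr)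
  | cons p L ih =>
    obtain ⟨β, z⟩ := p
    obtain ⟨hβr, hβz, hL⟩ := hL
    obtain ⟨hβL, hnd⟩ := List.nodup_cons.mp hnd
    obtain ⟨c', hc', hagree⟩ := hc.exists_shift hβr hβz
    have hL' : IsFanChain c' u z L := hL.congr fun q hq a b =>
      (hagree q.1 (fun he => hβL (List.mem_map.mpr ⟨q, hq, he⟩)) a b).symm
    refine disjoint_left.mpr fun δ hδu hδe => ?_
    have hδβ : δ ≠ β := fun he => mem_missing.mp hδu z (he ▸ hβz)
    exact disjoint_left.mp (ih hc' hL' hnd) ((mem_missing_congr (hagree δ hδβ) u).mpr hδu)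
      ((mem_missing_congr (hagree δ hδβ) _).mpr hδe)

theorem IsNearColoring.exists_mem_fan_of_mem_missing (hH : ¬ Colorable H k) {r w : V}
    (hc : IsNearColoring H u r c) (hw : w ∈ fan c u r) {δ : Fin k} (hδ : δ ∈ missing c w) :
    ∃ z ∈ fan c u r, δ ∈ c u z := by
  obtain ⟨L, hL, hnd, rfl⟩ := mem_fan.mp hw
  obtain ⟨z, hz⟩ : ∃ z, δ ∈ c u z := by
    simpa using disjoint_right.mp (hc.disjoint_missing_chainEnd hH hL hnd) hδ
  refine ⟨z, mem_fan.mpr ?_, hz⟩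
  by_cases hδL : δ ∈ L.map Prod.fst
  · obtain ⟨p, hp, rfl⟩ := List.mem_map.mp hδL
    obtain ⟨L₁, L₂, rfl⟩ := List.append_of_mem hp
    have hpz : p.2 = z := hc.eq_of_mem (hL.mem p (by simp)) hz
    refine ⟨L₁ ++ [p], (isFanChain_append (L₂ := L₂).mp (by simpa using hL)).1, hnd.sublist ?_,
      by simp [chainEnd_append, hpz]⟩
    simp
  · refine ⟨L ++ [(δ, z)], isFanChain_append.mpr ⟨hL, hδ, hz, trivial⟩, ?_,
      by simp [chainEnd_append]⟩
    simp only [List.map_append, List.map_cons, List.map_nil, List.nodup_append]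
    refine ⟨hnd, List.nodup_singleton δ, fun a ha b hb => ?_⟩
    rintro rfl
    exact hδL (List.mem_singleton.mp hb ▸ ha)

end FanChain

section Kempe

variable {c : V → V → Finset (Fin k)} {α γ : Fin k} {u w : V}

def kempeComponent (c : V → V → Finset (Fin k)) (α γ : Fin k) (w : V) : Set V :=
  {z | Relation.ReflTransGen (fun a b => α ∈ c a b ∨ γ ∈ c a b) w z}

theorem mem_kempeComponent_of_mem {a b : V} (ha : a ∈ kempeComponent c α γ w)
    (hab : α ∈ c a b ∨ γ ∈ c a b) : b ∈ kempeComponent c α γ w :=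
  Relation.ReflTransGen.tail ha hab

theorem IsProper.mem_kempeComponent_comm (hc : IsProper c) {z : V}
    (hz : z ∈ kempeComponent c α γ w) : w ∈ kempeComponent c α γ z := by
  have : Std.Symm fun a b => α ∈ c a b ∨ γ ∈ c a b :=
    ⟨fun a b => by simp only [hc.symm a b]; exact id⟩
  exact Relation.ReflTransGen.stdSymm.symm _ _ hz

open Classical in
noncomputable def kempeSwap (c : V → V → Finset (Fin k)) (α γ : Fin k) (w : V) :
    V → V → Finset (Fin k) :=
  fun a b => if a ∈ kempeComponent c α γ w then (c a b).map (Equiv.swap α γ).toEmbedding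
    else c a b

theorem kempeSwap_of_notMem {a : V} (ha : a ∉ kempeComponent c α γ w) (b : V) :
    kempeSwap c α γ w a b = c a b := by
  simp [kempeSwap, ha]

theorem mem_kempeSwap_of_mem {a : V} (ha : a ∈ kempeComponent c α γ w) {b : V} {δ : Fin k} :
    δ ∈ kempeSwap c α γ w a b ↔ Equiv.swap α γ δ ∈ c a b := by
  simp [kempeSwap, ha, mem_map_equiv]

theorem card_kempeSwap (a b : V) : #(kempeSwap c α γ w a b) = #(c a b) := by
  unfold kempeSwap
  split_ifs <;> simp

theorem map_swap_eq_self {s : Finset (Fin k)} (hα : α ∉ s) (hγ : γ ∉ s) :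
    s.map (Equiv.swap α γ).toEmbedding = s := by
  ext δ
  rw [mem_map_equiv, Equiv.symm_swap, Equiv.swap_apply_def]
  split_ifs with h₁ h₂ <;> simp_all

theorem IsProper.kempeSwap (hc : IsProper c) : IsProper (kempeSwap c α γ w) where
  symm a b := by
    have hedge : ∀ {a b}, a ∈ kempeComponent c α γ w → b ∉ kempeComponent c α γ w →
        (c a b).map (Equiv.swap α γ).toEmbedding = c a b := fun ha hb =>
      map_swap_eq_self (fun h => hb (mem_kempeComponent_of_mem ha (.inl h)))
        (fun h => hb (mem_kempeComponent_of_mem ha (.inr h)))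
    unfold GS.kempeSwap
    split_ifs with ha hb hb
    · rw [hc.symm a b]
    · rw [hedge ha hb, hc.symm]
    · rw [hedge hb ha, hc.symm]
    · exact hc.symm a b
  disjoint z w₁ w₂ hne := by
    unfold GS.kempeSwap
    split_ifs
    exacts [(Finset.disjoint_map _).mpr (hc.disjoint z w₁ w₂ hne), hc.disjoint z w₁ w₂ hne]

theorem IsNearColoring.kempeSwap [DecidableEq V] {H : V → V → ℕ} {r : V}
    (hc : IsNearColoring H u r c) : IsNearColoring H u r (kempeSwap c α γ w) where
  toIsProper := hc.toIsProper.kempeSwap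
  card_add a b := by rw [card_kempeSwap]; exact hc.card_add a b

open Classical in
noncomputable def nextAlong (c : V → V → Finset (Fin k)) (δ : Fin k) (z : V) : Option V :=
  if h : ∃ w, δ ∈ c z w then some h.choose else none

noncomputable def kempeWalk (c : V → V → Finset (Fin k)) (α γ : Fin k) (u : V) : ℕ → Option V
  | 0 => some u
  | n + 1 => (kempeWalk c α γ u n).bind (nextAlong c (if Even n then γ else α))

theorem IsProper.nextAlong_eq_some (hc : IsProper c) {δ : Fin k} {z w : V} :
    nextAlong c δ z = some w ↔ δ ∈ c z w := by
  unfold nextAlong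
  split_ifs with h
  · exact ⟨fun he => Option.some_inj.mp he ▸ h.choose_spec,
      fun hw => congrArg some (hc.eq_of_mem h.choose_spec hw)⟩
  · simpa using fun hw => h ⟨w, hw⟩

theorem IsProper.kempeWalk_succ_eq_some (hc : IsProper c) {n : ℕ} {w : V} :
    kempeWalk c α γ u (n + 1) = some w ↔
      ∃ y, kempeWalk c α γ u n = some y ∧ (if Even n then γ else α) ∈ c y w := by
  simp only [kempeWalk, Option.bind_eq_some_iff, hc.nextAlong_eq_some]

theorem kempeWalk_eq_none_of_le {m n : ℕ} (h : kempeWalk c α γ u m = none) (hmn : m ≤ n) :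
    kempeWalk c α γ u n = none := by
  induction n, hmn using Nat.le_induction with
  | base => exact h
  | succ n _ ih => simp [kempeWalk, ih]

variable [Fintype V]

theorem mem_missing_kempeSwap_of_mem {z : V} (hz : z ∈ kempeComponent c α γ w) {δ : Fin k} :
    δ ∈ missing (kempeSwap c α γ w) z ↔ Equiv.swap α γ δ ∈ missing c z := by
  simp only [mem_missing, mem_kempeSwap_of_mem hz]

theorem missing_kempeSwap_of_notMem {z : V} (hz : z ∉ kempeComponent c α γ w) :
    missing (kempeSwap c α γ w) z = missing c z := by
  simp only [missing, kempeSwap_of_notMem hz]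

theorem IsProper.exists_kempeWalk_eq_of_mem (hc : IsProper c)
    (hα : α ∈ missing c u) {n : ℕ} {z w : V} (hz : kempeWalk c α γ u n = some z)
    (hzw : α ∈ c z w ∨ γ ∈ c z w) : ∃ m, kempeWalk c α γ u m = some w := by
  by_cases hfwd : (if Even n then γ else α) ∈ c z w
  · exact ⟨n + 1, hc.kempeWalk_succ_eq_some.mpr ⟨z, hz, hfwd⟩⟩
  -- otherwise `zw` carries the colour by which the walk entered `z`, so `w` came before `z`
  have hback : (if Even (n + 1) then γ else α) ∈ c z w := by
    by_cases hn : Even n <;> simp_all [Nat.even_add_one]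
  cases n with
  | zero =>
    obtain rfl : u = z := Option.some_inj.mp hz
    exact absurd hback (by simpa using mem_missing.mp hα w)
  | succ n =>
    obtain ⟨y, hy, hyz⟩ := hc.kempeWalk_succ_eq_some.mp hz
    have hcol : (if Even (n + 1 + 1) then γ else α) = if Even n then γ else α := by
      simp [Nat.even_add_one]
    rw [hcol] at hback
    rw [hc.symm] at hyz
    exact ⟨n, hc.eq_of_mem hyz hback ▸ hy⟩

theorem IsProper.kempeWalk_succ_eq_none (hc : IsProper c) {n : ℕ} {z : V}
    (hz : kempeWalk c α γ u n = some z) (hzu : z ≠ u) (hγ : γ ∈ missing c z) :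
    kempeWalk c α γ u (n + 1) = none := by
  cases n with
  | zero => exact absurd (Option.some_inj.mp hz).symm hzu
  | succ n =>
    obtain ⟨y, -, hyz⟩ := hc.kempeWalk_succ_eq_some.mp hz
    have hn : ¬ Even n := fun hn => mem_missing.mp hγ y (by simpa [hn, hc.symm] using hyz)
    have hnext : nextAlong c γ z = none := by
      unfold nextAlong
      exact dif_neg fun ⟨w, hw⟩ => mem_missing.mp hγ w hw
    change (kempeWalk c α γ u (n + 1)).bind _ = none
    rw [hz, Option.bind_some, if_pos (by simpa [Nat.even_add_one] using hn)]
    exact hnext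

theorem IsProper.exists_kempeWalk_eq (hc : IsProper c) (hα : α ∈ missing c u)
    {z : V} (hz : z ∈ kempeComponent c α γ u) : ∃ n, kempeWalk c α γ u n = some z := by
  induction hz with
  | refl => exact ⟨0, rfl⟩
  | tail _ hyz ih =>
    obtain ⟨n, hn⟩ := ih
    exact hc.exists_kempeWalk_eq_of_mem hα hn hyz

/-- Kempe chains are paths: `u` is one end, and `z₁`, `z₂` would both have to be the other. -/
theorem IsProper.eq_of_mem_kempeComponent (hc : IsProper c) (hα : α ∈ missing c u)
    {z₁ z₂ : V} (h₁ : z₁ ∈ kempeComponent c α γ u) (h₂ : z₂ ∈ kempeComponent c α γ u)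
    (hz₁ : z₁ ≠ u) (hz₂ : z₂ ≠ u) (hγ₁ : γ ∈ missing c z₁) (hγ₂ : γ ∈ missing c z₂) :
    z₁ = z₂ := by
  obtain ⟨n₁, hn₁⟩ := hc.exists_kempeWalk_eq hα h₁
  obtain ⟨n₂, hn₂⟩ := hc.exists_kempeWalk_eq hα h₂
  rcases lt_trichotomy n₁ n₂ with h | rfl | h
  · simp [kempeWalk_eq_none_of_le (hc.kempeWalk_succ_eq_none hn₁ hz₁ hγ₁) h] at hn₂
  · exact Option.some_inj.mp (hn₁.symm.trans hn₂)
  · simp [kempeWalk_eq_none_of_le (hc.kempeWalk_succ_eq_none hn₂ hz₂ hγ₂) h] at hn₁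

end Kempe

section Fan

variable [Fintype V] {c : V → V → Finset (Fin k)} {u : V}

/-- The chain survives the swap up to its first step `(γ, z)` starting inside the swapped
component; `α` becomes missing at that start, or at the end if there is no such step. -/
theorem IsFanChain.exists_prefix_kempeSwap {α γ : Fin k} {w : V} (hα : α ∈ missing c u)
    (hu : u ∉ kempeComponent c α γ w) {r : V} {L : List (Fin k × V)} (hL : IsFanChain c u r L)
    (hend : chainEnd r L ∈ kempeComponent c α γ w) (hγ : γ ∈ missing c (chainEnd r L)) :
    ∃ L', L' <+: L ∧ IsFanChain (kempeSwap c α γ w) u r L' ∧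
      α ∈ missing (kempeSwap c α γ w) (chainEnd r L') := by
  induction L generalizing r with
  | nil =>
    exact ⟨[], List.prefix_refl _, trivial,
      (mem_missing_kempeSwap_of_mem hend).mpr (by rwa [Equiv.swap_apply_left])⟩
  | cons p L ih =>
    obtain ⟨β, z⟩ := p
    obtain ⟨hβr, hβz, hL⟩ := hL
    by_cases hstop : β = γ ∧ r ∈ kempeComponent c α γ w
    · obtain ⟨rfl, hr⟩ := hstop
      exact ⟨[], List.nil_prefix, trivial,
        (mem_missing_kempeSwap_of_mem hr).mpr (by rwa [Equiv.swap_apply_left])⟩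
    obtain ⟨L', hpre, hL', hα'⟩ := ih hL hend hγ
    refine ⟨(β, z) :: L', List.cons_prefix_cons.mpr ⟨rfl, hpre⟩, ⟨?_, ?_, hL'⟩, hα'⟩
    · by_cases hr : r ∈ kempeComponent c α γ w
      · have hβα : β ≠ α := fun he => mem_missing.mp hα z (he ▸ hβz)
        rw [mem_missing_kempeSwap_of_mem hr,
          Equiv.swap_apply_of_ne_of_ne hβα fun he => hstop ⟨he, hr⟩]
        exact hβr
      · rwa [missing_kempeSwap_of_notMem hr]
    · rwa [kempeSwap_of_notMem hu]

variable [DecidableEq V] {H : V → V → ℕ} {r : V}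

theorem IsNearColoring.ne_of_mem_fan (hc : IsNearColoring H u r c) (hloop : ∀ a, H a a = 0)
    {w : V} (hw : w ∈ fan c u r) : w ≠ u := by
  obtain ⟨L, hL, -, rfl⟩ := mem_fan.mp hw
  exact hL.chainEnd_ne (hc.apply_self_eq_empty hloop) (hc.ne hloop)

theorem IsNearColoring.mem_kempeComponent_of_mem_fan (hH : ¬ Colorable H k)
    (hc : IsNearColoring H u r c) {α γ : Fin k} (hα : α ∈ missing c u) {w : V}
    (hw : w ∈ fan c u r) (hγ : γ ∈ missing c w) : w ∈ kempeComponent c α γ u := by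
  by_contra hwu
  obtain ⟨L, hL, hnd, rfl⟩ := mem_fan.mp hw
  have hu : u ∉ kempeComponent c α γ (chainEnd r L) := fun h =>
    hwu (hc.mem_kempeComponent_comm h)
  obtain ⟨L', hpre, hL', hα'⟩ := hL.exists_prefix_kempeSwap hα hu .refl hγ
  have hαu : α ∈ missing (GS.kempeSwap c α γ (chainEnd r L)) u := by
    rwa [missing_kempeSwap_of_notMem hu]
  exact disjoint_left.mp (hc.kempeSwap.disjoint_missing_chainEnd hH hL'
    (hnd.sublist (hpre.sublist.map _))) hαu hα'

theorem IsNearColoring.pairwiseDisjoint_missing_fan (hH : ¬ Colorable H k)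
    (hloop : ∀ a, H a a = 0) (hc : IsNearColoring H u r c) (hu : (missing c u).Nonempty) :
    (fan c u r : Set V).PairwiseDisjoint (missing c) := by
  intro w₁ hw₁ w₂ hw₂ hne
  obtain ⟨α, hα⟩ := hu
  refine disjoint_left.mpr fun γ hγ₁ hγ₂ => hne ?_
  exact hc.eq_of_mem_kempeComponent hα (hc.mem_kempeComponent_of_mem_fan hH hα hw₁ hγ₁)
    (hc.mem_kempeComponent_of_mem_fan hH hα hw₂ hγ₂) (hc.ne_of_mem_fan hloop hw₁)
    (hc.ne_of_mem_fan hloop hw₂) hγ₁ hγ₂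

theorem IsNearColoring.colorable {t : ℕ} (hloop : ∀ a, H a a = 0) (hc : IsNearColoring H u r c)
    (hu : mdeg H u ≤ k) (hdeg : ∀ z ≠ u, mdeg H z + t ≤ k) (hmul : ∀ z ≠ u, H u z ≤ t) :
    Colorable H k := by
  by_contra hH
  set W := fan c u r
  have hmissing : t * #W ≤ #(W.biUnion (missing c)) := by
    rw [card_biUnion (hc.pairwiseDisjoint_missing_fan hH hloop (hc.nonempty_missing hu))]
    calc t * #W = ∑ _w ∈ W, t := by rw [sum_const, smul_eq_mul, mul_comm]
      _ ≤ _ := sum_le_sum fun w hw => hc.le_card_missing (hdeg w (hc.ne_of_mem_fan hloop hw))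
  have hcover : W.biUnion (missing c) ⊆ W.biUnion (c u) := by
    intro δ hδ
    obtain ⟨w, hw, hδw⟩ := mem_biUnion.mp hδ
    obtain ⟨z, hz, hδz⟩ := hc.exists_mem_fan_of_mem_missing hH hw hδw
    exact mem_biUnion.mpr ⟨z, hz, hδz⟩
  have hedges : ∑ z ∈ W, #(c u z) + 1 ≤ t * #W := by
    have h := sum_congr rfl fun z (_ : z ∈ W) => hc.card_add u z
    simp only [sum_add_distrib, Sym2.congr_right, sum_ite_eq'] at h
    rw [if_pos (start_mem_fan r)] at h
    calc _ = ∑ z ∈ W, H u z := h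
      _ ≤ ∑ _z ∈ W, t := sum_le_sum fun z hz => hmul z (hc.ne_of_mem_fan hloop hz)
      _ = t * #W := by rw [sum_const, smul_eq_mul, mul_comm]
  have := (card_le_card hcover).trans card_biUnion_le
  omega

end Fan

end Colourings

section Multigraph

variable {V : Type*} [DecidableEq V] {G : V → V → ℕ} {k t : ℕ}

def removeEdge (G : V → V → ℕ) (u v : V) : V → V → ℕ :=
  fun a b => G a b - if s(a, b) = s(u, v) then 1 else 0

theorem removeEdge_le (u v a b : V) : removeEdge G u v a b ≤ G a b :=
  Nat.sub_le _ _

theorem IsMultigraph.removeEdge (hG : IsMultigraph G) (u v : V) :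
    IsMultigraph (removeEdge G u v) :=
  ⟨fun a b => by simp only [GS.removeEdge, hG.1 a b, Sym2.eq_swap (a := a)],
    fun a => by simp [GS.removeEdge, hG.2 a]⟩

variable [Fintype V]

theorem mdeg_removeEdge_le (u v z : V) : mdeg (removeEdge G u v) z ≤ mdeg G z :=
  sum_le_sum fun w _ => removeEdge_le u v z w

theorem sum_mdeg_removeEdge_lt {u v : V} (huv : 0 < G u v) :
    ∑ z, mdeg (removeEdge G u v) z < ∑ z, mdeg G z := by
  refine sum_lt_sum (fun z _ => mdeg_removeEdge_le u v z) ⟨u, mem_univ u, ?_⟩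
  refine sum_lt_sum (fun w _ => removeEdge_le u v u w) ⟨v, mem_univ v, ?_⟩
  simp only [GS.removeEdge, ↓reduceIte]
  omega

theorem IsProperEdgeColoring.isNearColoring_of_removeEdge (hG : ∀ a b, G a b = G b a)
    {u v : V} (huv : 0 < G u v) {c : V → V → Finset (Fin k)}
    (hc : IsProperEdgeColoring (removeEdge G u v) k c) : IsNearColoring G u v c where
  symm := hc.1
  disjoint := hc.2.2
  card_add a b := by
    rw [hc.2.1, GS.removeEdge]
    split_ifs with hab
    · have : 0 < G a b := by
        obtain ⟨rfl, rfl⟩ | ⟨rfl, rfl⟩ := Sym2.eq_iff.mp hab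
        exacts [huv, hG a b ▸ huv]
      omega
    · rfl

theorem exists_pos_forall_ne_mdeg_add_le (x : V) (hx : ∀ z ≠ x, mdeg G z + t ≤ k)
    {a b : V} (hab : 0 < G a b) : ∃ u v, 0 < G u v ∧ ∀ z ≠ u, mdeg G z + t ≤ k := by
  by_cases hxv : ∃ v, 0 < G x v
  · obtain ⟨v, hv⟩ := hxv
    exact ⟨x, v, hv, hx⟩
  push Not at hxv
  have hax : a ≠ x := by
    rintro rfl
    exact absurd (hxv b) (by omega)
  refine ⟨a, b, hab, fun z hz => ?_⟩
  by_cases hzx : z = x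
  · subst hzx
    have hdeg : mdeg G z = 0 := sum_eq_zero fun w _ => Nat.le_zero.mp (hxv w)
    have := hx a hax
    omega
  · exact hx z hzx

theorem colorable_of_forall_ne_mdeg_add_le (hG : IsMultigraph G) (x : V)
    (hΔ : ∀ z, mdeg G z ≤ k) (hx : ∀ z ≠ x, mdeg G z + t ≤ k)
    (hμ : ∀ a b, a ≠ b → G a b ≤ t) : Colorable G k := by
  induction hn : ∑ z, mdeg G z using Nat.strong_induction_on generalizing G with
  | _ n ih =>
  by_cases hempty : ∀ a b, G a b = 0
  · exact ⟨fun _ _ => ∅, fun _ _ => rfl, fun a b => by simp [hempty],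
      fun _ _ _ _ => disjoint_empty_left _⟩
  push Not at hempty
  obtain ⟨a, b, hab⟩ := hempty
  obtain ⟨u, v, huv, hu⟩ := exists_pos_forall_ne_mdeg_add_le x hx (Nat.pos_of_ne_zero hab)
  obtain ⟨c, hc⟩ := ih _ (hn ▸ sum_mdeg_removeEdge_lt huv) (hG.removeEdge u v)
    (fun z => (mdeg_removeEdge_le u v z).trans (hΔ z))
    (fun z hz => (Nat.add_le_add_right (mdeg_removeEdge_le u v z) t).trans (hx z hz))
    (fun a b hab => (removeEdge_le u v a b).trans (hμ a b hab)) rfl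
  exact (hc.isNearColoring_of_removeEdge hG.1 huv).colorable hG.2 (hΔ u) hu
    fun z hz => hμ u z hz.symm

end Multigraph

end GS

theorem chromIndex_le_of_degree_condition_general {V : Type*} [Fintype V] [DecidableEq V]
    (k t μ : ℕ)
    (G : V → V → ℕ) (hG : IsMultigraph G)
    (hΔ : maxDeg G ≤ k)
    (hμ : ∀ u v : V, u ≠ v → G u v ≤ μ)
    (x : V) (hx : ∀ v : V, v ≠ x → (mdeg G v : ℤ) ≤ (k : ℤ) - (t : ℤ))
    (ht : max 2 μ ≤ t) :
    chromIndex G ≤ k :=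
  Nat.sInf_le <| colorable_of_forall_ne_mdeg_add_le hG x
    (fun z => (le_sup (mem_univ z)).trans hΔ)
    (fun z hz => by have := hx z hz; omega)
    (fun a b hab => (hμ a b hab).trans ((le_max_right 2 μ).trans ht))

/-- **Lemma.** Let `k` be a positive integer and `G` a loopless multigraph with
maximum degree at most `k` and maximum edge multiplicity at most `μ`. If there
is a vertex `x` such that every other vertex has degree at most `k - t`, where
`t ≥ max {2, μ}`, then `χ'(G) ≤ k`. -/
theorem chromIndex_le_of_degree_condition {V : Type*} [Fintype V] [DecidableEq V]
    (k t μ : ℕ) (hk : 1 ≤ k)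
    (G : V → V → ℕ) (hG : IsMultigraph G)
    (hΔ : maxDeg G ≤ k)
    (hμ : ∀ u v : V, u ≠ v → G u v ≤ μ)
    (x : V) (hx : ∀ v : V, v ≠ x → (mdeg G v : ℤ) ≤ (k : ℤ) - (t : ℤ))
    (ht : max 2 μ ≤ t) :
    chromIndex G ≤ k :=
  chromIndex_le_of_degree_condition_general k t μ G hG hΔ hμ x hx ht
end

section
/- Let p : ℕ → (0,1) satisfy p(m) = o(1) and m·p(m) → ∞ as m → ∞, and let h : ℕ → ℝ satisfy h(m) ≥ 1, h(m) = o(m·p(m)), and suppose d(m) := m·p(m) + h(m) is an integer for each m. Let X ~ Bin(m, p(m)) and define α(m) by Pr[X = d(m)+1] = (1 − α(m))·Pr[X = d(m)]. Then α(m) = Θ(h(m)/(m·p(m))). If in addition h(m) = Ω(√(m·p(m))), then Pr[X = m·p(m) + h(m)] = O(α(m))·Pr[X ≥ m·p(m) + h(m)]. -/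
open Finset Filter Asymptotics

namespace GS

/-- `Pr[Bin(m, p) = k]`. -/
noncomputable def binomPr (m : ℕ) (p : ℝ) (k : ℕ) : ℝ :=
  (m.choose k : ℝ) * p ^ k * (1 - p) ^ (m - k)

/-- `Pr[Bin(m, p) ≥ t]`, for a real threshold `t`. -/
noncomputable def binomPrGe (m : ℕ) (p : ℝ) (t : ℝ) : ℝ :=
  ∑ j ∈ Finset.range (m + 1), if t ≤ (j : ℝ) then binomPr m p j else 0

end GS

open GS Filter Asymptotics

set_option maxHeartbeats 1000000 in
private lemma binomPr_nonneg' {m k : ℕ} {p : ℝ} (h0 : 0 ≤ p) (h1 : p ≤ 1) :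
    0 ≤ binomPr m p k := by
  unfold binomPr
  have : (0:ℝ) ≤ 1 - p := by linarith
  positivity

private lemma binomPr_pos' {m k : ℕ} {p : ℝ} (h0 : 0 < p) (h1 : p < 1) (hk : k ≤ m) :
    0 < binomPr m p k := by
  unfold binomPr
  have h2 : (0:ℝ) < 1 - p := by linarith
  have h3 : 0 < m.choose k := Nat.choose_pos hk
  positivity

private lemma binomPr_succ' (m k : ℕ) (p : ℝ) :
    binomPr m p (k+1) * (((k:ℝ)+1) * (1-p)) = binomPr m p k * (((m - k : ℕ):ℝ) * p) := by
  unfold binomPr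
  rcases lt_or_ge k m with hk | hk
  · have hc : ((m.choose (k+1) : ℝ)) * ((k:ℝ)+1) = (m.choose k : ℝ) * ((m - k : ℕ):ℝ) := by
      exact_mod_cast congrArg (Nat.cast : ℕ → ℝ) (Nat.choose_succ_right_eq m k)
    have hpow : ((1:ℝ)-p)^(m-k) = (1-p)^(m-(k+1)) * (1-p) := by
      rw [← pow_succ]; congr 1; omega
    rw [hpow]
    linear_combination (p^(k+1) * (1-p)^(m-(k+1)) * (1-p)) * hc
  · have h1 : m.choose (k+1) = 0 := Nat.choose_eq_zero_of_lt (by omega)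
    have h2 : m - k = 0 := by omega
    rw [h1, h2]; simp

set_option maxHeartbeats 1000000 in
private lemma part2_core (m dm : ℕ) (p H c₀ αm : ℝ)
    (hp0 : 0 < p) (hp10 : p ≤ 1/10)
    (hq100 : 100 ≤ (m:ℝ)*p)
    (hH1 : 1 ≤ H) (hH10 : H ≤ ((m:ℝ)*p)/10)
    (hHC : H ≤ ((m:ℝ)*p)/(2*(2 + 4*c₀^2)))
    (hsq : Real.sqrt ((m:ℝ)*p) ≤ c₀ * H)
    (hdm : (dm:ℝ) = (m:ℝ)*p + H)
    (hα1 : H/((m:ℝ)*p) ≤ 3*αm) :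
    binomPr m p dm ≤ 3*Real.exp (2*(2 + 4*c₀^2)) * (αm * binomPrGe m p (dm:ℝ)) := by
  have hp1 : p < 1 := by linarith
  obtain ⟨q, hqdef⟩ : ∃ q : ℝ, q = (m:ℝ)*p := ⟨_, rfl⟩
  rw [← hqdef] at hq100 hH10 hHC hsq hdm hα1
  have hq0 : (0:ℝ) < q := by linarith
  have hH0 : (0:ℝ) < H := by linarith
  obtain ⟨C₁, hC₁def⟩ : ∃ C₁ : ℝ, C₁ = 2 + 4*c₀^2 := ⟨_, rfl⟩
  rw [← hC₁def] at hHC ⊢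
  have hC₁2 : (2:ℝ) ≤ C₁ := by nlinarith [sq_nonneg c₀]
  have hC₁0 : (0:ℝ) < C₁ := by linarith
  obtain ⟨s, hsdef⟩ : ∃ s : ℝ, s = Real.sqrt q := ⟨_, rfl⟩
  rw [← hsdef] at hsq
  have hs2 : s^2 = q := by rw [hsdef]; exact Real.sq_sqrt hq0.le
  have hs0 : 0 ≤ s := by rw [hsdef]; exact Real.sqrt_nonneg q
  have hs10 : 10 ≤ s := by nlinarith
  have hc₀0 : 0 < c₀ := by nlinarith
  have hqH : q/H ≤ c₀^2 * H := by
    rw [div_le_iff₀ hH0]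
    nlinarith
  obtain ⟨K, hKdef⟩ : ∃ K : ℕ, K = ⌊q/H⌋₊ := ⟨_, rfl⟩
  have hK1 : (K:ℝ) ≤ q/H := hKdef ▸ Nat.floor_le (by positivity)
  have hK2 : q/H < (K:ℝ)+1 := by
    rw [hKdef]; exact_mod_cast Nat.lt_floor_add_one (q/H)
  have hK10 : (10:ℝ) ≤ q/H := by rw [le_div_iff₀ hH0]; linarith
  obtain ⟨β, hβdef⟩ : ∃ β : ℝ, β = C₁ * (H/q) := ⟨_, rfl⟩
  have hβ0 : 0 < β := by rw [hβdef]; positivity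
  have hβq : β * q = C₁ * H := by rw [hβdef]; field_simp
  have hβhalf : β ≤ 1/2 := by
    have h2C : H*(2*C₁) ≤ q := by
      have := (le_div_iff₀ (by positivity : (0:ℝ) < 2*C₁)).mp hHC
      linarith
    nlinarith
  have hdKm : dm + K ≤ m := by
    have hr : (dm:ℝ) + (K:ℝ) ≤ (m:ℝ) := by
      have hqHq : q/H ≤ q := by
        rw [div_le_iff₀ hH0]
        nlinarith
      have : (K:ℝ) ≤ q := le_trans hK1 hqHq
      have hm10 : q ≤ (m:ℝ)/10 := by
        have : (0:ℝ) ≤ (m:ℝ) := Nat.cast_nonneg m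
        rw [hqdef]; nlinarith
      rw [hdm]; linarith
    exact_mod_cast hr
  have hBd0 : 0 ≤ binomPr m p dm := binomPr_nonneg' hp0.le hp1.le
  -- step inequality
  have step : ∀ i : ℕ, i < K →
      (1-β) * binomPr m p (dm+i) ≤ binomPr m p (dm+i+1) := by
    intro i hi
    have hj : dm + i < m := by omega
    have jcast : ((dm+i : ℕ):ℝ) = q + H + (i:ℝ) := by push_cast [hdm]; ring
    have hDj : (0:ℝ) < (((dm+i:ℕ):ℝ)+1)*(1-p) := by
      rw [jcast]; nlinarith
    have hi1 : (i:ℝ) + 1 ≤ (K:ℝ) := by exact_mod_cast Nat.succ_le_of_lt hi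
    have e1 : (i:ℝ) + 1 ≤ c₀^2 * H := le_trans (le_trans hi1 hK1) hqH
    have e5 : (9/10)*q ≤ (((dm+i:ℕ):ℝ)+1)*(1-p) := by rw [jcast]; nlinarith
    have e6 : (((dm+i:ℕ):ℝ)+1)*(1-p) - ((m:ℝ)-((dm+i:ℕ):ℝ))*p = H + (i:ℝ) + 1 - p := by
      rw [jcast, hqdef]; ring
    have e7 : H + (i:ℝ) + 1 - p ≤ β * ((((dm+i:ℕ):ℝ)+1)*(1-p)) := by
      nlinarith [mul_le_mul_of_nonneg_left e5 hβ0.le]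
    have hkey : (1-β) * ((((dm+i:ℕ):ℝ)+1)*(1-p)) ≤ ((m:ℝ)-((dm+i:ℕ):ℝ))*p := by
      nlinarith
    have hB0 : 0 ≤ binomPr m p (dm+i) := binomPr_nonneg' hp0.le hp1.le
    have t1 := binomPr_succ' m (dm+i) p
    rw [Nat.cast_sub hj.le] at t1
    have t2 : ((1-β) * binomPr m p (dm+i)) * ((((dm+i:ℕ):ℝ)+1)*(1-p))
        ≤ binomPr m p (dm+i+1) * ((((dm+i:ℕ):ℝ)+1)*(1-p)) := by
      nlinarith [mul_le_mul_of_nonneg_left hkey hB0]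
    exact le_of_mul_le_mul_right t2 hDj
  -- geometric lower bound
  have geo : ∀ i : ℕ, i ≤ K → (1-β)^i * binomPr m p dm ≤ binomPr m p (dm+i) := by
    intro i
    induction i with
    | zero => intro _; simpa using le_refl (binomPr m p dm)
    | succ n ih =>
      intro hn
      calc (1-β)^(n+1) * binomPr m p dm = (1-β) * ((1-β)^n * binomPr m p dm) := by ring
        _ ≤ (1-β) * binomPr m p (dm+n) :=
            mul_le_mul_of_nonneg_left (ih (by omega)) (by linarith)
        _ ≤ binomPr m p (dm+n+1) := step n (by omega)
  -- sum lower bound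
  have hsumge : ((K:ℝ)+1) * ((1-β)^K * binomPr m p dm) ≤ binomPrGe m p (dm:ℝ) := by
    have h1 : ∀ j ∈ Finset.Ico dm (dm+K+1), (1-β)^K * binomPr m p dm ≤ binomPr m p j := by
      intro j hj
      rw [Finset.mem_Ico] at hj
      obtain ⟨i, rfl⟩ : ∃ i, j = dm + i := ⟨j - dm, by omega⟩
      have hiK : i ≤ K := by omega
      calc (1-β)^K * binomPr m p dm ≤ (1-β)^i * binomPr m p dm :=
            mul_le_mul_of_nonneg_right
              (pow_le_pow_of_le_one (by linarith) (by linarith) hiK) hBd0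
        _ ≤ binomPr m p (dm+i) := geo i hiK
    calc ((K:ℝ)+1) * ((1-β)^K * binomPr m p dm)
        = ∑ _j ∈ Finset.Ico dm (dm+K+1), ((1-β)^K * binomPr m p dm) := by
          rw [Finset.sum_const, Nat.card_Ico]
          have : dm + K + 1 - dm = K + 1 := by omega
          rw [this]; push_cast; ring
      _ ≤ ∑ j ∈ Finset.Ico dm (dm+K+1), binomPr m p j := Finset.sum_le_sum h1
      _ = ∑ j ∈ Finset.Ico dm (dm+K+1), (if (dm:ℝ) ≤ (j:ℝ) then binomPr m p j else 0) := by
          refine Finset.sum_congr rfl fun j hj => ?_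
          rw [if_pos]
          exact_mod_cast (Finset.mem_Ico.mp hj).1
      _ ≤ ∑ j ∈ Finset.range (m+1), (if (dm:ℝ) ≤ (j:ℝ) then binomPr m p j else 0) := by
          refine Finset.sum_le_sum_of_subset_of_nonneg ?_ ?_
          · intro x hx
            rw [Finset.mem_Ico] at hx
            rw [Finset.mem_range]
            omega
          · intro j _ _
            split_ifs
            · exact binomPr_nonneg' hp0.le hp1.le
            · exact le_rfl
      _ = binomPrGe m p (dm:ℝ) := rfl
  -- exponential bound
  have hexp : Real.exp (-(2*C₁)) ≤ (1-β)^K := by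
    have h0 : (0:ℝ) < Real.exp (2*β) := Real.exp_pos _
    have l0 : 1 ≤ (1-β) * Real.exp (2*β) := by nlinarith [Real.add_one_le_exp (2*β)]
    have l1 : Real.exp (-(2*β)) ≤ 1 - β := by
      rw [Real.exp_neg, inv_eq_one_div, div_le_iff₀ h0]; linarith
    have hβK : β*(K:ℝ) ≤ C₁ := by
      have h2 : β*(K:ℝ) ≤ β*(q/H) := mul_le_mul_of_nonneg_left hK1 hβ0.le
      have h3 : β*(q/H) = C₁ := by rw [hβdef]; field_simp
      linarith
    calc Real.exp (-(2*C₁)) ≤ Real.exp ((K:ℝ)*(-(2*β))) := by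
          apply Real.exp_le_exp.mpr; linarith [hβK]
      _ = (Real.exp (-(2*β)))^K := by rw [← Real.exp_nat_mul]
      _ ≤ (1-β)^K := pow_le_pow_left₀ (Real.exp_pos _).le l1 K
  -- conclusion
  have c1 : 0 < αm := by
    have : 0 < H/q := by positivity
    linarith
  have c2 : (1:ℝ)/3 ≤ αm * ((K:ℝ)+1) := by
    have ha : H ≤ 3*αm*q := by
      have := (div_le_iff₀ hq0).mp hα1; linarith
    have hb : q ≤ ((K:ℝ)+1)*H := by
      have := (div_lt_iff₀ hH0).mp hK2; linarith
    have h1 : q ≤ 3*αm*q*((K:ℝ)+1) := by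
      have h0 := mul_le_mul_of_nonneg_right ha (by positivity : (0:ℝ) ≤ (K:ℝ)+1)
      linarith [h0, hb]
    have h2 : q * 1 ≤ q * (3*αm*((K:ℝ)+1)) := by linarith [h1]
    have h3 := le_of_mul_le_mul_left h2 hq0
    linarith
  have hX0 : 0 ≤ (1-β)^K * binomPr m p dm := by
    exact mul_nonneg (pow_nonneg (by linarith) K) hBd0
  have c4 : (1/3)*(Real.exp (-(2*C₁)) * binomPr m p dm) ≤ αm * binomPrGe m p (dm:ℝ) := by
    calc (1/3)*(Real.exp (-(2*C₁)) * binomPr m p dm)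
        ≤ (1/3)*((1-β)^K * binomPr m p dm) := by
          apply mul_le_mul_of_nonneg_left _ (by norm_num)
          exact mul_le_mul_of_nonneg_right hexp hBd0
      _ ≤ (αm * ((K:ℝ)+1))*((1-β)^K * binomPr m p dm) :=
          mul_le_mul_of_nonneg_right c2 hX0
      _ = αm * (((K:ℝ)+1)*((1-β)^K * binomPr m p dm)) := by ring
      _ ≤ αm * binomPrGe m p (dm:ℝ) := mul_le_mul_of_nonneg_left hsumge c1.le
  have c5 := mul_le_mul_of_nonneg_left c4 (by positivity : (0:ℝ) ≤ 3*Real.exp (2*C₁))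
  have c6 : 3*Real.exp (2*C₁) * ((1/3)*(Real.exp (-(2*C₁)) * binomPr m p dm))
      = (Real.exp (2*C₁) * Real.exp (-(2*C₁))) * binomPr m p dm := by ring
  have c7 : Real.exp (2*C₁) * Real.exp (-(2*C₁)) = 1 := by
    rw [← Real.exp_add]; norm_num
  rw [c6, c7, one_mul] at c5
  exact c5


/-- **Claim.** Let `p(m) = o(1)` with `m p(m) → ∞`, let `h(m) ≥ 1` with
`h = o(mp)`, and suppose `d(m) = m p(m) + h(m)` is an integer. Let
`X ~ Bin(m, p(m))` and define `α(m)` by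
`Pr[X = d + 1] = (1 - α) Pr[X = d]`. Then `α = Θ(h / (mp))`; and if moreover
`h = Ω(√(mp))`, then `Pr[X = d] = O(α) · Pr[X ≥ d]`. -/
theorem binomial_slow_decay
    (p : ℕ → ℝ) (hp : ∀ m, p m ∈ Set.Ioo (0 : ℝ) 1)
    (hpo : p =o[atTop] (fun _ => (1 : ℝ)))
    (hmp : Tendsto (fun m : ℕ => (m : ℝ) * p m) atTop atTop)
    (h : ℕ → ℝ) (hh1 : ∀ m, 1 ≤ h m)
    (hho : h =o[atTop] (fun m : ℕ => (m : ℝ) * p m))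
    (d : ℕ → ℕ) (hd : ∀ m, (d m : ℝ) = (m : ℝ) * p m + h m)
    (α : ℕ → ℝ)
    (hα : ∀ m, binomPr m (p m) (d m + 1) = (1 - α m) * binomPr m (p m) (d m)) :
    (α =Θ[atTop] fun m : ℕ => h m / ((m : ℝ) * p m)) ∧
    (((fun m : ℕ => Real.sqrt ((m : ℝ) * p m)) =O[atTop] h) →
      (fun m => binomPr m (p m) (d m)) =O[atTop]
        (fun m => α m * binomPrGe m (p m) ((d m : ℝ)))) := by
  have h110 : ∀ᶠ m in atTop, p m ≤ 1/10 := by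
    filter_upwards [hpo.def (by norm_num : (0:ℝ) < 1/10)] with m hm
    simp only [Real.norm_eq_abs, norm_one, mul_one] at hm
    linarith [le_abs_self (p m)]
  have hq100 : ∀ᶠ m : ℕ in atTop, (100:ℝ) ≤ (m:ℝ)*p m := hmp.eventually_ge_atTop 100
  have hh10 : ∀ᶠ m : ℕ in atTop, h m ≤ ((m:ℝ)*p m)/10 := by
    filter_upwards [hho.def (by norm_num : (0:ℝ) < 1/10), hq100] with m h1 h2
    rw [Real.norm_eq_abs, Real.norm_eq_abs, abs_of_pos (by linarith : (0:ℝ) < (m:ℝ)*p m)] at h1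
    linarith [le_abs_self (h m)]
  have hform : ∀ᶠ m : ℕ in atTop, d m ≤ m ∧
      α m = (h m + 1 - p m) / ((((m:ℝ)*p m) + h m + 1) * (1 - p m)) := by
    filter_upwards [h110, hq100, hh10] with m h1 h2 h3
    obtain ⟨hp0, hp1⟩ := hp m
    have hm0 : (0:ℝ) ≤ (m:ℝ) := Nat.cast_nonneg m
    have hq10 : (m:ℝ)*p m ≤ (m:ℝ)/10 := by nlinarith
    have hdm : d m ≤ m := by
      have : ((d m : ℕ):ℝ) ≤ (m:ℝ) := by rw [hd m]; nlinarith
      exact_mod_cast this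
    have hBpos : 0 < binomPr m (p m) (d m) := binomPr_pos' hp0 hp1 hdm
    have key := binomPr_succ' m (d m) (p m)
    rw [hα m, Nat.cast_sub hdm] at key
    have key2 : binomPr m (p m) (d m) * ((1 - α m) * (((d m:ℝ)+1) * (1 - p m)))
        = binomPr m (p m) (d m) * ((((m:ℝ) - (d m:ℝ))) * p m) := by linear_combination key
    have E := mul_left_cancel₀ hBpos.ne' key2
    rw [hd m] at E
    have hD : (0:ℝ) < (((m:ℝ)*p m) + h m + 1) * (1 - p m) := by
      have := hh1 m; nlinarith
    refine ⟨hdm, ?_⟩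
    rw [eq_div_iff hD.ne']
    linear_combination -E
  have hbounds : ∀ᶠ m : ℕ in atTop, 0 < α m ∧ 0 < h m / ((m:ℝ)*p m) ∧
      α m ≤ 4 * (h m / ((m:ℝ)*p m)) ∧ h m / ((m:ℝ)*p m) ≤ 3 * α m := by
    filter_upwards [h110, hq100, hh10, hform] with m h1 h2 h3 h4
    obtain ⟨hp0, hp1⟩ := hp m
    have hH := hh1 m
    set q := (m:ℝ)*p m with hq
    set H := h m with hH'
    have hA : (0:ℝ) < H + 1 - p m := by linarith
    have hD : (0:ℝ) < (q + H + 1) * (1 - p m) := by nlinarith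
    have hq0 : (0:ℝ) < q := by linarith
    rw [h4.2]
    refine ⟨div_pos hA hD, div_pos (by linarith) hq0, ?_, ?_⟩
    · rw [show 4 * (H/q) = (4*H)/q by ring, div_le_div_iff₀ hD hq0]
      have e1 : H + 1 - p m ≤ 2*H := by linarith
      have e2 : q*(9/10) ≤ (q+H+1)*(1-p m) := by nlinarith
      nlinarith [mul_le_mul_of_nonneg_right e1 hq0.le,
        mul_le_mul_of_nonneg_left e2 (by linarith : (0:ℝ) ≤ 4*H)]
    · rw [div_le_iff₀ hq0, show 3 * ((H + 1 - p m) / ((q + H + 1) * (1 - p m))) * q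
        = (3 * (H + 1 - p m) * q) / ((q + H + 1) * (1 - p m)) by ring, le_div_iff₀ hD]
      have e3 : (q+H+1)*(1-p m) ≤ (112/100)*q := by nlinarith
      nlinarith [mul_le_mul_of_nonneg_left e3 (by linarith : (0:ℝ) ≤ H),
        mul_le_mul_of_nonneg_right (by linarith : H ≤ H + 1 - p m) hq0.le]
  refine ⟨?_, ?_⟩
  · constructor
    · rw [isBigO_iff]
      refine ⟨4, ?_⟩
      filter_upwards [hbounds] with m ⟨b1, b2, b3, b4⟩
      rw [Real.norm_eq_abs, Real.norm_eq_abs, abs_of_pos b1, abs_of_pos b2]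
      exact b3
    · rw [isBigO_iff]
      refine ⟨3, ?_⟩
      filter_upwards [hbounds] with m ⟨b1, b2, b3, b4⟩
      rw [Real.norm_eq_abs, Real.norm_eq_abs, abs_of_pos b1, abs_of_pos b2]
      exact b4
  · intro hsqO
    obtain ⟨c₀, hc₀⟩ := isBigO_iff.mp hsqO
    have hHC : ∀ᶠ m : ℕ in atTop, h m ≤ ((m:ℝ)*p m)/(2*(2 + 4*c₀^2)) := by
      have hpos : (0:ℝ) < 1/(2*(2 + 4*c₀^2)) := by positivity
      filter_upwards [hho.def hpos, hq100] with m h1 h2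
      rw [Real.norm_eq_abs, Real.norm_eq_abs,
        abs_of_pos (by linarith : (0:ℝ) < (m:ℝ)*p m)] at h1
      have := le_abs_self (h m)
      rw [div_eq_mul_inv, mul_comm]
      calc h m ≤ |h m| := le_abs_self (h m)
        _ ≤ 1/(2*(2 + 4*c₀^2)) * ((m:ℝ)*p m) := h1
        _ = (2*(2 + 4*c₀^2))⁻¹ * ((m:ℝ)*p m) := by rw [one_div]
    have hsq' : ∀ᶠ m : ℕ in atTop, Real.sqrt ((m:ℝ)*p m) ≤ c₀ * h m := by
      filter_upwards [hc₀] with m h1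
      have hhm : (0:ℝ) < h m := lt_of_lt_of_le one_pos (hh1 m)
      rw [Real.norm_eq_abs, Real.norm_eq_abs, abs_of_nonneg (Real.sqrt_nonneg _),
        abs_of_pos hhm] at h1
      exact h1
    rw [isBigO_iff]
    refine ⟨3*Real.exp (2*(2 + 4*c₀^2)), ?_⟩
    filter_upwards [h110, hq100, hh10, hHC, hsq', hbounds] with m e1 e2 e3 e4 e5 e6
    obtain ⟨hp0, hp1⟩ := hp m
    have hb := part2_core m (d m) (p m) (h m) c₀ (α m) hp0 e1 e2 (hh1 m) e3 e4 e5 (hd m)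
      e6.2.2.2
    have hB0 : 0 ≤ binomPr m (p m) (d m) := binomPr_nonneg' hp0.le hp1.le
    rw [Real.norm_eq_abs, Real.norm_eq_abs, abs_of_nonneg hB0]
    exact hb.trans (mul_le_mul_of_nonneg_left (le_abs_self _) (by positivity))
end

section
/- Let n → ∞, let n' = n'(n) ≤ n be an integer with n' = n(1 − o(1)), let 0 ≤ p = p(n) ≤ 1 and p' = p'(n) ≤ p with p' = p(1 − o(1)), and let k = k(n) ≤ n' be an integer. Let X ~ Bin(n, p). Assume there exists an integer s = s(n) with k ≤ s ≤ n' such that Pr[X ≥ s] = o(Pr[X ≥ k]), (n − n')/n' = o(1/s), and (p − p')/p = o(1/s). Then for X' ~ Bin(n', p') one has Pr[X ≥ k] = (1 + o(1))·Pr[X' ≥ k]. -/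
open Finset Filter Asymptotics

open GS Filter Asymptotics

/-!
Increasing the number of trials or the success probability can only increase `Pr[Bin(m, p) ≥ k]`
(both follow from `Pr[Bin(m+1, p) ≥ k+1] = (1-p) Pr[Bin(m, p) ≥ k+1] + p Pr[Bin(m, p) ≥ k]`), so
`Pr[X' ≥ k] ≤ Pr[X ≥ k]`. Conversely, `Pr[X ≥ s] = o(Pr[X ≥ k])` means that the tail of `X` is
carried by the point probabilities at `k ≤ j < s`, and each of these shrinks only by a factor
`1 - o(1)` when passing to `(n', p')`: `C(n, j) - C(n', j) ≤ (j / n)(n - n') C(n, j)` and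
`p^j - p'^j ≤ j p^(j-1) (p - p')`, where `j (n - n') / n` and `j (p - p') / p` are `o(1)`
since `j ≤ s`.
-/

lemma choose_succ_le_choose_succ_add_mul {m N : ℕ} (h : m ≤ N) (i : ℕ) :
    N.choose (i + 1) ≤ m.choose (i + 1) + (N - m) * (N - 1).choose i := by
  induction N, h using Nat.le_induction with
  | base => simp
  | succ N hmN ih =>
    have hmono : (N - 1).choose i ≤ N.choose i := Nat.choose_le_choose i (N.sub_le 1)
    rw [Nat.choose_succ_succ', Nat.add_sub_cancel, show N + 1 - m = N - m + 1 by omega]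
    nlinarith

lemma one_sub_mul_choose_le_choose {n n' j : ℕ} {ε : ℝ} (hn : n' ≤ n) (hε : 0 ≤ ε)
    (h : (j : ℝ) * (n - n') ≤ ε * n) : (1 - ε) * n.choose j ≤ n'.choose j := by
  rcases j with _ | i
  · simpa using hε
  rcases n with _ | N
  · simp
  have hsum : ((N + 1).choose (i + 1) : ℝ) ≤ n'.choose (i + 1) + (N + 1 - n') * N.choose i := by
    have := choose_succ_le_choose_succ_add_mul hn i
    rw [Nat.add_sub_cancel] at this
    exact_mod_cast this
  have hpascal : ((N : ℝ) + 1) * N.choose i = (N + 1).choose (i + 1) * (i + 1) := by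
    exact_mod_cast Nat.add_one_mul_choose_eq N i
  have hC : (0 : ℝ) ≤ (N + 1).choose (i + 1) := by positivity
  push_cast at h ⊢
  have key : ((N : ℝ) + 1) * ((1 - ε) * (N + 1).choose (i + 1)) ≤ (N + 1) * n'.choose (i + 1) := by
    nlinarith [mul_le_mul_of_nonneg_left hsum (by positivity : (0 : ℝ) ≤ N + 1),
      mul_le_mul_of_nonneg_right h hC]
  exact le_of_mul_le_mul_left key (by positivity)

lemma one_sub_mul_pow_le_pow {p p' ε : ℝ} (hp'0 : 0 ≤ p') (hp' : p' ≤ p) (hε : 0 ≤ ε) {j : ℕ}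
    (h : j * (p - p') ≤ ε * p) : (1 - ε) * p ^ j ≤ p' ^ j := by
  rcases j with _ | i
  · simpa using hε
  have hp0 : 0 ≤ p := hp'0.trans hp'
  have hmvt : p ^ (i + 1) - p' ^ (i + 1) ≤ (p - p') * (i + 1 : ℕ) * p ^ i := by
    simpa [abs_of_nonneg, hp0, hp'0, hp', pow_le_pow_left₀ hp'0 hp'] using
      abs_pow_sub_pow_le p p' (i + 1)
  have := mul_le_mul_of_nonneg_right h (pow_nonneg hp0 i)
  rw [pow_succ] at hmvt ⊢
  push_cast at hmvt this
  nlinarith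

lemma mul_le_of_norm_div_le_mul_norm_one_div {a b s ε : ℝ} (ha : 0 ≤ a) (hb : 0 ≤ b) (hs : 0 ≤ s)
    (hε : 0 ≤ ε) (hb0 : b = 0 → s * a = 0) (h : ‖a / b‖ ≤ ε * ‖1 / s‖) : s * a ≤ ε * b := by
  rcases hb.eq_or_lt with rfl | hb
  · simp [hb0 rfl]
  rcases hs.eq_or_lt with rfl | hs
  · simpa using mul_nonneg hε hb.le
  rw [Real.norm_of_nonneg (div_nonneg ha hb.le), Real.norm_of_nonneg (by positivity),
    div_le_iff₀ hb] at h
  calc s * a ≤ s * (ε * (1 / s) * b) := by gcongr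
    _ = ε * b := by field_simp

lemma exists_tendsto_one_and_eq_mul {α : Type*} {l : Filter α} {A B : α → ℝ}
    (hle : ∀ᶠ x in l, B x ≤ A x) (hge : ∀ ε > 0, ∀ᶠ x in l, (1 - ε) * A x ≤ B x) :
    ∃ c : α → ℝ, Tendsto c l (nhds 1) ∧ ∀ᶠ x in l, A x = c x * B x := by
  have hB : ∀ᶠ x in l, 0 ≤ B x := by
    filter_upwards [hle, hge (1 / 2) one_half_pos] with x h₁ h₂
    linarith
  refine ⟨fun x => if B x = 0 then 1 else A x / B x,
    tendsto_order.2 ⟨fun a ha => ?_, fun b hb => ?_⟩, ?_⟩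
  · filter_upwards [hle, hB] with x h₁ h₂
    split_ifs with h
    · exact ha
    · exact ha.trans_le ((one_le_div (h₂.lt_of_ne' h)).2 h₁)
  · have hb0 : 0 < b := by linarith
    -- with this `ε`, `(1 - ε) b = (b + 1) / 2 > 1`
    filter_upwards [hle, hB, hge ((b - 1) / (2 * b)) (by positivity)] with x h₁ h₂ h₃
    split_ifs with h
    · exact hb
    · have hBpos : 0 < B x := h₂.lt_of_ne' h
      have hε : 1 - (b - 1) / (2 * b) = (b + 1) / (2 * b) := by field_simp; ring
      rw [hε, div_mul_eq_mul_div, div_le_iff₀ (by positivity)] at h₃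
      rw [div_lt_iff₀ hBpos]
      nlinarith
  · filter_upwards [hle, hge (1 / 2) one_half_pos] with x h₁ h₂
    split_ifs with h
    · rw [h] at h₁ h₂ ⊢
      linarith
    · exact (div_mul_cancel₀ _ h).symm

namespace GS

noncomputable def binomTail (m k : ℕ) (p : ℝ) : ℝ :=
  ∑ j ∈ Ico k (m + 1), binomPr m p j

lemma binomPrGe_natCast (m k : ℕ) (p : ℝ) : binomPrGe m p k = binomTail m k p := by
  rw [binomPrGe, binomTail, ← sum_filter]
  congr 1
  ext j
  simp [and_comm]

lemma binomPr_nonneg {p : ℝ} (hp0 : 0 ≤ p) (hp1 : p ≤ 1) (m j : ℕ) : 0 ≤ binomPr m p j := by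
  have : 0 ≤ 1 - p := sub_nonneg.2 hp1
  unfold binomPr
  positivity

lemma binomPr_eq_zero_of_lt {m j : ℕ} (h : m < j) (p : ℝ) : binomPr m p j = 0 := by
  simp [binomPr, Nat.choose_eq_zero_of_lt h]

lemma binomPr_succ_succ (m j : ℕ) (p : ℝ) :
    binomPr (m + 1) p (j + 1) = (1 - p) * binomPr m p (j + 1) + p * binomPr m p j := by
  rcases lt_or_ge j m with h | h
  · obtain ⟨d, rfl⟩ := Nat.exists_eq_add_of_lt h
    simp only [binomPr, Nat.choose_succ_succ', show j + d + 1 + 1 - (j + 1) = d + 1 by omega,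
      show j + d + 1 - (j + 1) = d by omega, show j + d + 1 - j = d + 1 by omega]
    push_cast
    ring
  · simp only [binomPr, Nat.choose_succ_succ', Nat.choose_eq_zero_of_lt (Nat.lt_succ_of_le h),
      Nat.add_sub_add_right]
    push_cast
    ring

lemma binomTail_nonneg {p : ℝ} (hp0 : 0 ≤ p) (hp1 : p ≤ 1) (m k : ℕ) : 0 ≤ binomTail m k p :=
  sum_nonneg fun j _ => binomPr_nonneg hp0 hp1 m j

lemma binomTail_zero (m : ℕ) (p : ℝ) : binomTail m 0 p = 1 := by
  calc binomTail m 0 p = (p + (1 - p)) ^ m := by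
        rw [add_pow, binomTail, ← range_eq_Ico]
        exact sum_congr rfl fun j _ => by rw [binomPr]; ring
    _ = 1 := by simp

lemma sum_Ico_binomPr_eq_binomTail {m N : ℕ} (hN : m + 1 ≤ N) (k : ℕ) (p : ℝ) :
    ∑ j ∈ Ico k N, binomPr m p j = binomTail m k p :=
  (sum_subset (Ico_subset_Ico_right hN) fun _ hj hj' =>
    binomPr_eq_zero_of_lt (by simp_all) p).symm

lemma binomTail_succ_succ (m k : ℕ) (p : ℝ) :
    binomTail (m + 1) (k + 1) p = (1 - p) * binomTail m (k + 1) p + p * binomTail m k p := by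
  rw [binomTail, ← sum_Ico_add', ← sum_Ico_binomPr_eq_binomTail (Nat.le_succ (m + 1)) (k + 1),
    ← sum_Ico_add', binomTail, mul_sum, mul_sum, ← sum_add_distrib]
  exact sum_congr rfl fun j _ => binomPr_succ_succ m j p

lemma binomTail_antitone_threshold {p : ℝ} (hp0 : 0 ≤ p) (hp1 : p ≤ 1) (m : ℕ) :
    Antitone fun k => binomTail m k p := fun _ _ h =>
  sum_le_sum_of_subset_of_nonneg (Ico_subset_Ico_left h) fun j _ _ => binomPr_nonneg hp0 hp1 m j

lemma binomTail_monotone_trials {p : ℝ} (hp0 : 0 ≤ p) (hp1 : p ≤ 1) (k : ℕ) :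
    Monotone fun m => binomTail m k p := by
  refine monotone_nat_of_le_succ fun m => ?_
  rcases k with _ | k
  · simp [binomTail_zero]
  · have := binomTail_antitone_threshold hp0 hp1 m k.le_succ
    simp only [binomTail_succ_succ]
    nlinarith

lemma binomTail_mono_prob {p q : ℝ} (hp0 : 0 ≤ p) (hpq : p ≤ q) (hq1 : q ≤ 1) (m k : ℕ) :
    binomTail m k p ≤ binomTail m k q := by
  induction m generalizing k with
  | zero =>
    rcases k with _ | k
    · simp [binomTail_zero]
    · simp [binomTail]
  | succ m ih =>
    rcases k with _ | k
    · simp [binomTail_zero]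
    · -- `(1 - p) a + p b` is nondecreasing in `p` when `a ≤ b`
      have h := binomTail_antitone_threshold hp0 (hpq.trans hq1) m k.le_succ
      have h₁ := ih (k + 1)
      have h₂ := ih k
      rw [binomTail_succ_succ, binomTail_succ_succ]
      nlinarith

lemma binomTail_le_binomTail {n n' k : ℕ} {p p' : ℝ} (hn : n' ≤ n) (hp'0 : 0 ≤ p') (hp' : p' ≤ p)
    (hp1 : p ≤ 1) : binomTail n' k p' ≤ binomTail n k p :=
  (binomTail_monotone_trials hp'0 (hp'.trans hp1) k hn).trans (binomTail_mono_prob hp'0 hp' hp1 n k)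

lemma one_sub_sq_mul_binomPr_le {n n' j : ℕ} {p p' ε : ℝ} (hn : n' ≤ n) (hp'0 : 0 ≤ p')
    (hp' : p' ≤ p) (hp1 : p ≤ 1) (hε0 : 0 ≤ ε) (hε1 : ε ≤ 1)
    (hN : (j : ℝ) * (n - n') ≤ ε * n) (hP : j * (p - p') ≤ ε * p) :
    (1 - ε) ^ 2 * binomPr n p j ≤ binomPr n' p' j := by
  have hq : (1 - p) ^ (n - j) ≤ (1 - p') ^ (n' - j) :=
    (pow_le_pow_of_le_one (by linarith) (by linarith) (Nat.sub_le_sub_right hn j)).trans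
      (pow_le_pow_left₀ (by linarith) (by linarith) _)
  have hε : 0 ≤ 1 - ε := sub_nonneg.2 hε1
  calc (1 - ε) ^ 2 * binomPr n p j
      = (1 - ε) * n.choose j * ((1 - ε) * p ^ j) * (1 - p) ^ (n - j) := by rw [binomPr]; ring
    _ ≤ n'.choose j * p' ^ j * (1 - p') ^ (n' - j) := by
        have hp0 : 0 ≤ p := hp'0.trans hp'
        refine mul_le_mul (mul_le_mul (one_sub_mul_choose_le_choose hn hε0 hN)
          (one_sub_mul_pow_le_pow hp'0 hp' hε0 hP) ?_ (by positivity)) hq ?_ (by positivity)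
        · exact mul_nonneg hε (pow_nonneg hp0 j)
        · exact pow_nonneg (by linarith) _
    _ = binomPr n' p' j := rfl

lemma one_sub_pow_three_mul_binomTail_le {n n' k s : ℕ} {p p' ε : ℝ} (hn : n' ≤ n)
    (hks : k ≤ s) (hsn : s ≤ n') (hp'0 : 0 ≤ p') (hp' : p' ≤ p) (hp1 : p ≤ 1)
    (hε0 : 0 ≤ ε) (hε1 : ε ≤ 1) (hN : (s : ℝ) * (n - n') ≤ ε * n) (hP : s * (p - p') ≤ ε * p)
    (hT : binomTail n s p ≤ ε * binomTail n k p) :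
    (1 - ε) ^ 3 * binomTail n k p ≤ binomTail n' k p' := by
  have hsplit : binomTail n k p = ∑ j ∈ Ico k s, binomPr n p j + binomTail n s p :=
    (sum_Ico_consecutive _ hks (by omega)).symm
  have hbody : (1 - ε) * binomTail n k p ≤ ∑ j ∈ Ico k s, binomPr n p j := by linarith
  have hterm : ∀ j ∈ Ico k s, (1 - ε) ^ 2 * binomPr n p j ≤ binomPr n' p' j := by
    intro j hj
    have hjs : (j : ℝ) ≤ s := by exact_mod_cast (mem_Ico.1 hj).2.le
    have hnn' : (0 : ℝ) ≤ n - n' := sub_nonneg.2 (by exact_mod_cast hn)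
    exact one_sub_sq_mul_binomPr_le hn hp'0 hp' hp1 hε0 hε1
      ((mul_le_mul_of_nonneg_right hjs hnn').trans hN)
      ((mul_le_mul_of_nonneg_right hjs (sub_nonneg.2 hp')).trans hP)
  calc (1 - ε) ^ 3 * binomTail n k p = (1 - ε) ^ 2 * ((1 - ε) * binomTail n k p) := by ring
    _ ≤ (1 - ε) ^ 2 * ∑ j ∈ Ico k s, binomPr n p j := by gcongr
    _ ≤ ∑ j ∈ Ico k s, binomPr n' p' j := by rw [mul_sum]; exact sum_le_sum hterm
    _ ≤ binomTail n' k p' :=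
        sum_le_sum_of_subset_of_nonneg (Ico_subset_Ico_right (by omega))
          fun j _ _ => binomPr_nonneg hp'0 (hp'.trans hp1) n' j

end GS

theorem binomial_tail_stable_general
    (n' : ℕ → ℕ) (hn'le : ∀ n, n' n ≤ n)
    (p p' : ℕ → ℝ) (hp : ∀ n, p n ∈ Set.Icc (0 : ℝ) 1)
    (hp'le : ∀ n, p' n ≤ p n)
    (hp'o : (fun n : ℕ => p n - p' n) =o[atTop] p)
    (k s : ℕ → ℕ) (hks : ∀ n, k n ≤ s n) (hsn' : ∀ n, s n ≤ n' n)
    (hPr : (fun n : ℕ => binomPrGe n (p n) ((s n : ℝ)))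
        =o[atTop] (fun n : ℕ => binomPrGe n (p n) ((k n : ℝ))))
    (h1 : (fun n : ℕ => ((n : ℝ) - (n' n : ℝ)) / (n' n : ℝ))
        =o[atTop] (fun n : ℕ => 1 / (s n : ℝ)))
    (h2 : (fun n : ℕ => (p n - p' n) / p n)
        =o[atTop] (fun n : ℕ => 1 / (s n : ℝ))) :
    ∃ c : ℕ → ℝ, Tendsto c atTop (nhds 1) ∧
      ∀ᶠ n : ℕ in atTop,
        binomPrGe n (p n) ((k n : ℝ))
          = c n * binomPrGe (n' n) (p' n) ((k n : ℝ)) := by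
  have hp'0 : ∀ᶠ n in atTop, 0 ≤ p' n := by
    filter_upwards [hp'o.def one_pos] with n hn
    rw [one_mul, Real.norm_of_nonneg (sub_nonneg.2 (hp'le n)), Real.norm_of_nonneg (hp n).1] at hn
    linarith
  simp only [binomPrGe_natCast] at hPr ⊢
  refine exists_tendsto_one_and_eq_mul ?_ fun ε hε => ?_
  · filter_upwards [hp'0] with n hp'n
    exact binomTail_le_binomTail (hn'le n) hp'n (hp'le n) (hp n).2
  obtain ⟨δ, hδ0, hδ1, hδε⟩ : ∃ δ : ℝ, 0 < δ ∧ δ ≤ 1 ∧ 1 - ε ≤ (1 - δ) ^ 3 :=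
    ⟨min (ε / 3) 1, by positivity, min_le_right _ _, by
      nlinarith [min_le_left (ε / 3) 1, min_le_right (ε / 3) 1, sq_nonneg (min (ε / 3) 1)]⟩
  filter_upwards [hp'0, hPr.def hδ0, h1.def hδ0, h2.def hδ0] with n hp'n hT hN hP
  have hn : (n' n : ℝ) ≤ n := by exact_mod_cast hn'le n
  refine le_trans ?_ (one_sub_pow_three_mul_binomTail_le (hn'le n) (hks n) (hsn' n) hp'n (hp'le n)
    (hp n).2 hδ0.le hδ1 ?_ ?_ ?_)
  · exact mul_le_mul_of_nonneg_right hδε (binomTail_nonneg (hp n).1 (hp n).2 _ _)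
  · refine (mul_le_of_norm_div_le_mul_norm_one_div (sub_nonneg.2 hn) (Nat.cast_nonneg _)
      (Nat.cast_nonneg _) hδ0.le (fun h0 => ?_) hN).trans (by gcongr)
    simp [Nat.le_zero.1 ((hsn' n).trans (Nat.cast_eq_zero.1 h0).le)]
  · refine mul_le_of_norm_div_le_mul_norm_one_div (sub_nonneg.2 (hp'le n)) (hp n).1
      (Nat.cast_nonneg _) hδ0.le (fun h0 => ?_) hP
    simp [le_antisymm (h0 ▸ hp'le n) hp'n, h0]
  · simpa only [Real.norm_of_nonneg (binomTail_nonneg (hp n).1 (hp n).2 _ _)] using hT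

/-- **Lemma.** Let `n' ≤ n` with `n' = n(1 - o(1))`, `p' ≤ p` with
`p' = p(1 - o(1))`, and `k ≤ n'`. Let `X ~ Bin(n, p)`. If there is an integer
`s` with `k ≤ s ≤ n'`, `Pr[X ≥ s] = o(Pr[X ≥ k])`, `(n - n')/n' = o(1/s)` and
`(p - p')/p = o(1/s)`, then for `X' ~ Bin(n', p')` one has
`Pr[X ≥ k] = (1 + o(1)) Pr[X' ≥ k]`. -/
theorem binomial_tail_stable
    (n' : ℕ → ℕ) (hn'le : ∀ n, n' n ≤ n)
    (hn'o : (fun n : ℕ => (n : ℝ) - (n' n : ℝ)) =o[atTop] (fun n : ℕ => (n : ℝ)))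
    (p p' : ℕ → ℝ) (hp : ∀ n, p n ∈ Set.Icc (0 : ℝ) 1)
    (hp'le : ∀ n, p' n ≤ p n)
    (hp'o : (fun n : ℕ => p n - p' n) =o[atTop] p)
    (k s : ℕ → ℕ) (hks : ∀ n, k n ≤ s n) (hsn' : ∀ n, s n ≤ n' n)
    (hPr : (fun n : ℕ => binomPrGe n (p n) ((s n : ℝ)))
        =o[atTop] (fun n : ℕ => binomPrGe n (p n) ((k n : ℝ))))
    (h1 : (fun n : ℕ => ((n : ℝ) - (n' n : ℝ)) / (n' n : ℝ))
        =o[atTop] (fun n : ℕ => 1 / (s n : ℝ)))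
    (h2 : (fun n : ℕ => (p n - p' n) / p n)
        =o[atTop] (fun n : ℕ => 1 / (s n : ℝ))) :
    ∃ c : ℕ → ℝ, Tendsto c atTop (nhds 1) ∧
      ∀ᶠ n : ℕ in atTop,
        binomPrGe n (p n) ((k n : ℝ))
          = c n * binomPrGe (n' n) (p' n) ((k n : ℝ)) :=
  binomial_tail_stable_general n' hn'le p p' hp hp'le hp'o k s hks hsn' hPr h1 h2
end

section
/- Let m = m(n) = ω(n² log n) and M ~ M(n, m). Let μ(M) = max{μ(e) : e a pair of distinct vertices} and μ_min(M) = min{μ(e) : e a pair of distinct vertices}. Then with high probability μ(M) − μ_min(M) = O(√(m·log n / n²)). (log denotes the natural logarithm.) -/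
open Finset Filter Asymptotics

/-!
Each pair count is binomial with `m` trials and mean `μ = m / N`, where `N = n(n-1)/2`.
Counting words exactly, `∑_ω exp (l · c(ω)) = (exp l + N - 1)^m ≤ N^m exp (μ (exp l - 1))`,
so the exponential Markov inequality with `l = ±t / (2μ)` gives the Chernoff bound
`P(|c - μ| > t) ≤ 2 exp (-t² / (4μ))` as long as `t ≤ 2μ`. For `t = 7 √(m log n / n²)` this is at
most `2 n⁻³`, which survives the union bound over the `N < n²/2` pairs; `t ≤ 2μ` is where
`m ≥ 4 n² log n` enters. Off the exceptional event all multiplicities lie in `[μ - t, μ + t]`.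
-/

open Real

namespace GS

section Chernoff

variable {α : Type*} [Fintype α] [DecidableEq α]

lemma card_filter_mul_le_sum {β : Type*} (s : Finset β) {f : β → ℝ} (hf : ∀ x ∈ s, 0 ≤ f x)
    (a : ℝ) : #{x ∈ s | a ≤ f x} * a ≤ ∑ x ∈ s, f x :=
  calc (#{x ∈ s | a ≤ f x} : ℝ) * a = ∑ x ∈ s with a ≤ f x, a := by
        rw [sum_const, nsmul_eq_mul]
    _ ≤ ∑ x ∈ s with a ≤ f x, f x := sum_le_sum fun x hx => (mem_filter.1 hx).2
    _ ≤ ∑ x ∈ s, f x := sum_le_sum_of_subset_of_nonneg (filter_subset _ _) fun x hx _ => hf x hx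

lemma sum_exp_mul_card_filter_eq (p : α) (m : ℕ) (l : ℝ) :
    ∑ ω : Fin m → α, exp (l * #{i | ω i = p}) = (exp l + (Fintype.card α - 1)) ^ m := by
  have hsum : ∑ a : α, (if a = p then exp l else 1) = exp l + (Fintype.card α - 1) := by
    have hcard : 1 ≤ Fintype.card α := Fintype.card_pos_iff.2 ⟨p⟩
    rw [Fintype.sum_eq_add_sum_compl p]
    simp [sum_ite_of_false, card_compl, Nat.cast_sub hcard]
  rw [← hsum, Fintype.sum_pow]
  refine sum_congr rfl fun ω _ => ?_
  rw [prod_ite, prod_const_one, mul_one, prod_const, mul_comm, Real.exp_nat_mul]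

lemma add_pow_le_pow_mul_exp {N y : ℝ} (hN : 0 < N) (hy : 0 ≤ N + y) (m : ℕ) :
    (N + y) ^ m ≤ N ^ m * exp (m * y / N) := by
  have h1 : 0 ≤ 1 + y / N := by
    have := div_nonneg hy hN.le
    rwa [add_div, div_self hN.ne'] at this
  calc (N + y) ^ m = N ^ m * (1 + y / N) ^ m := by rw [← mul_pow]; field_simp
    _ ≤ N ^ m * exp (y / N) ^ m := by
        gcongr
        linarith [add_one_le_exp (y / N)]
    _ = N ^ m * exp (m * y / N) := by rw [← Real.exp_nat_mul, mul_div_assoc]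

lemma card_le_exp_of_le_mul_sub (p : α) (m : ℕ) (l s : ℝ) :
    (#{ω : Fin m → α | s ≤ l * (#{i | ω i = p} - m / Fintype.card α)} : ℝ)
      ≤ Fintype.card α ^ m * exp (m / Fintype.card α * (exp l - 1 - l) - s) := by
  set N : ℝ := (Fintype.card α : ℝ)
  set μ : ℝ := m / N
  have hN : 1 ≤ N := Nat.one_le_cast.2 (Fintype.card_pos_iff.2 ⟨p⟩)
  have hevent : ∀ ω : Fin m → α, s ≤ l * (#{i | ω i = p} - μ) ↔
      exp (s + l * μ) ≤ exp (l * #{i | ω i = p}) := fun ω => by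
    rw [exp_le_exp]; constructor <;> intro h <;> linarith
  have hmarkov := card_filter_mul_le_sum (univ : Finset (Fin m → α))
    (fun ω _ => (exp_pos (l * #{i | ω i = p})).le) (exp (s + l * μ))
  simp_rw [← hevent, sum_exp_mul_card_filter_eq] at hmarkov
  rw [mul_comm, ← le_div_iff₀' (exp_pos _)] at hmarkov
  calc _ ≤ (exp l + (N - 1)) ^ m / exp (s + l * μ) := hmarkov
    _ ≤ N ^ m * exp (m * (exp l - 1) / N) / exp (s + l * μ) := by
        gcongr
        rw [← add_sub_assoc, add_comm, add_sub_assoc]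
        exact add_pow_le_pow_mul_exp (by linarith) (by linarith [exp_pos l]) m
    _ = N ^ m * exp (μ * (exp l - 1 - l) - s) := by
        rw [mul_div_assoc, ← exp_sub]
        congr 2
        ring

lemma card_lt_abs_sub_le (p : α) (m : ℕ) {t : ℝ} (ht : 0 < t)
    (htμ : t ≤ 2 * (m / Fintype.card α)) :
    (#{ω : Fin m → α | t < |(#{i | ω i = p} : ℝ) - m / Fintype.card α|} : ℝ)
      ≤ 2 * exp (-(t ^ 2 / (4 * (m / Fintype.card α)))) * Fintype.card α ^ m := by
  set μ : ℝ := m / Fintype.card α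
  set L := t / (2 * μ)
  have hμ : 0 < μ := by linarith
  have hL1 : L ≤ 1 := (div_le_one (by positivity)).2 htμ
  -- `L` minimises `μ L² - L t`, and `exp l - 1 - l ≤ l²` for `|l| ≤ 1`.
  have htail : ∀ l, |l| = L →
      (#{ω : Fin m → α | L * t ≤ l * (#{i | ω i = p} - μ)} : ℝ)
        ≤ exp (-(t ^ 2 / (4 * μ))) * Fintype.card α ^ m := by
    intro l hl
    rw [mul_comm (exp _)]
    refine (card_le_exp_of_le_mul_sub p m l (L * t)).trans ?_
    gcongr
    have hquad := (abs_le.1 (abs_exp_sub_one_sub_id_le (hl.le.trans hL1))).2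
    have hl2 : l ^ 2 = L ^ 2 := by rw [← sq_abs, hl]
    calc μ * (exp l - 1 - l) - L * t ≤ μ * L ^ 2 - L * t := by rw [← hl2]; gcongr
      _ = -(t ^ 2 / (4 * μ)) := by simp only [L]; field_simp; ring
  have hsplit : #{ω : Fin m → α | t < |(#{i | ω i = p} : ℝ) - μ|}
      ≤ #{ω : Fin m → α | L * t ≤ L * (#{i | ω i = p} - μ)}
        + #{ω : Fin m → α | L * t ≤ -L * (#{i | ω i = p} - μ)} := by
    refine (card_le_card fun ω hω => ?_).trans (card_union_le _ _)
    simp only [mem_filter, mem_univ, true_and, mem_union] at hω ⊢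
    have hL : 0 < L := by positivity
    rcases lt_abs.1 hω with h | h
    · left; nlinarith
    · right; nlinarith
  calc _ ≤ (#{ω : Fin m → α | L * t ≤ L * (#{i | ω i = p} - μ)} : ℝ)
        + #{ω : Fin m → α | L * t ≤ -L * (#{i | ω i = p} - μ)} := by exact_mod_cast hsplit
    _ ≤ _ := by
        have hL : |L| = L := abs_of_pos (by positivity)
        linarith [htail L hL, htail (-L) (by rw [abs_neg, hL])]

end Chernoff

section Multigraph

variable {V : Type*} {G : V → V → ℕ}

lemma muMax_le [Fintype V] [DecidableEq V] {b : ℝ} (hb : 0 ≤ b)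
    (h : ∀ u v, u ≠ v → (G u v : ℝ) ≤ b) :
    (muMax G : ℝ) ≤ b := by
  refine le_trans (Nat.cast_le.2 (Finset.sup_le fun uv _ => ?_)) (Nat.floor_le hb)
  split_ifs with huv
  · exact Nat.zero_le _
  · exact Nat.le_floor (h uv.1 uv.2 huv)

lemma le_muMin [Nontrivial V] {b : ℝ} (h : ∀ u v, u ≠ v → b ≤ G u v) :
    b ≤ muMin G := by
  obtain ⟨u, v, huv⟩ := exists_pair_ne V
  obtain ⟨u', v', huv', hmin⟩ :=
    Nat.sInf_mem (s := {t | ∃ u v : V, u ≠ v ∧ G u v = t}) ⟨G u v, u, v, huv, rfl⟩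
  rw [muMin, ← hmin]
  exact h u' v' huv'

end Multigraph

lemma two_mul_card_ndPair (n : ℕ) : 2 * (Fintype.card (NDPair n) : ℝ) = n * (n - 1) := by
  rw [Sym2.card_subtype_not_diag, Fintype.card_fin, Nat.cast_choose_two]
  ring

lemma mgGraph_eq_pairCount {n m : ℕ} (ω : MGOutcome n m) {u v : Fin n} (huv : u ≠ v) :
    mgGraph ω u v = pairCount ω ⟨s(u, v), Sym2.mk_isDiag_iff.not.2 huv⟩ :=
  congrArg card (filter_congr fun _ _ => ⟨fun h => Subtype.ext h, congrArg Subtype.val⟩)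

lemma muMax_sub_muMin_le {n m : ℕ} (hn : 2 ≤ n) {ω : MGOutcome n m} {μ t : ℝ}
    (hμt : 0 ≤ μ + t) (h : ∀ q, |(pairCount ω q : ℝ) - μ| ≤ t) :
    (muMax (mgGraph ω) : ℝ) - muMin (mgGraph ω) ≤ 2 * t := by
  have : Nontrivial (Fin n) := Fin.nontrivial_iff_two_le.2 hn
  have hmax := muMax_le (G := mgGraph ω) hμt fun u v huv => by
    rw [mgGraph_eq_pairCount ω huv]
    linarith [(abs_le.1 (h ⟨s(u, v), Sym2.mk_isDiag_iff.not.2 huv⟩)).2]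
  have hmin := le_muMin (G := mgGraph ω) (b := μ - t) fun u v huv => by
    rw [mgGraph_eq_pairCount ω huv]
    linarith [(abs_le.1 (h ⟨s(u, v), Sym2.mk_isDiag_iff.not.2 huv⟩)).1]
  linarith

lemma mgProb_le_one (n m : ℕ) (P : MGOutcome n m → Prop) : mgProb n m P ≤ 1 :=
  div_le_one_of_le₀ (Nat.cast_le.2 (Finite.card_subtype_le P)) (Nat.cast_nonneg _)

lemma one_sub_le_mgProb {n m : ℕ} (hn : 2 ≤ n) {P : MGOutcome n m → Prop} [DecidablePred P]
    {ε : ℝ} (h : (#{ω | ¬ P ω} : ℝ) ≤ ε * Fintype.card (NDPair n) ^ m) :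
    1 - ε ≤ mgProb n m P := by
  have hN : (0 : ℝ) < Fintype.card (NDPair n) := by
    have := two_mul_card_ndPair n
    have : (2 : ℝ) ≤ n := by exact_mod_cast hn
    nlinarith
  have htotal : (#{ω | P ω} : ℝ) + #{ω | ¬ P ω} = Fintype.card (NDPair n) ^ m := by
    rw [← Nat.cast_add, card_filter_add_card_filter_not, card_univ, Fintype.card_fun,
      Fintype.card_fin, Nat.cast_pow]
  rw [mgProb, Nat.card_eq_fintype_card, Nat.card_eq_fintype_card, Fintype.card_subtype,
    Fintype.card_fun, Fintype.card_fin, Nat.cast_pow, le_div_iff₀ (by positivity)]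
  linarith

-- `49 / 16 > 3` makes the Chernoff exponent beat the union bound over `< n²` pairs.
lemma deviation_bounds {n N M : ℝ} (hn : 2 ≤ n) (hN : 2 * N = n * (n - 1))
    (hM : 4 * (n ^ 2 * log n) ≤ M) :
    0 < 7 * √(M * log n / n ^ 2) ∧ 7 * √(M * log n / n ^ 2) ≤ 2 * (M / N) ∧
      3 * log n ≤ (7 * √(M * log n / n ^ 2)) ^ 2 / (4 * (M / N)) := by
  set a := M / n ^ 2
  have hlog : 0 < log n := log_pos (by linarith)
  have hM0 : 0 < M := by linarith [show 0 < n ^ 2 * log n by positivity]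
  have ha : 4 * log n ≤ a := by rw [le_div_iff₀ (by positivity)]; linarith
  have hN0 : 0 < N := by nlinarith
  have hμ : 2 * a ≤ M / N ∧ M / N ≤ 4 * a := by
    simp only [a, ← mul_div_assoc]
    constructor <;> rw [div_le_div_iff₀ (by positivity) (by positivity)]
    · nlinarith [mul_le_mul_of_nonneg_left (show 2 * N ≤ n ^ 2 by nlinarith) hM0.le]
    · nlinarith [mul_le_mul_of_nonneg_left (show n ^ 2 ≤ 4 * N by nlinarith) hM0.le]
  have ht2 : (7 * √(M * log n / n ^ 2)) ^ 2 = 49 * (a * log n) := by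
    rw [mul_pow, sq_sqrt (by positivity)]; ring
  refine ⟨by positivity, ?_, ?_⟩
  · nlinarith [sqrt_nonneg (M * log n / n ^ 2)]
  · rw [ht2, le_div_iff₀ (by linarith)]
    nlinarith

lemma one_sub_inv_le_mgProb_gap {n M : ℕ} (hn : 2 ≤ n) (hM : 4 * ((n : ℝ) ^ 2 * log n) ≤ M) :
    1 - 1 / (n : ℝ) ≤ mgProb n M (fun ω => (muMax (mgGraph ω) : ℝ) - muMin (mgGraph ω)
      ≤ 14 * √((M : ℝ) * log n / (n : ℝ) ^ 2)) := by
  set N : ℝ := (Fintype.card (NDPair n) : ℝ)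
  set μ : ℝ := M / N
  set t := 7 * √((M : ℝ) * log n / (n : ℝ) ^ 2)
  have hn' : (2 : ℝ) ≤ n := by exact_mod_cast hn
  have hN := two_mul_card_ndPair n
  obtain ⟨ht, htμ, hexp⟩ := deviation_bounds hn' hN hM
  have hn3 : (n : ℝ) ^ 3 ≤ exp (t ^ 2 / (4 * μ)) :=
    calc (n : ℝ) ^ 3 = exp (3 * log n) := by
          rw [show (3 : ℝ) * log n = log ((n : ℝ) ^ 3) by rw [log_pow]; norm_num,
            exp_log (by positivity)]
      _ ≤ exp (t ^ 2 / (4 * μ)) := exp_le_exp.2 hexp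
  have hsingle : ∀ q : NDPair n, (#{ω : MGOutcome n M | t < |(pairCount ω q : ℝ) - μ|} : ℝ)
      ≤ 2 * ((n : ℝ) ^ 3)⁻¹ * N ^ M := by
    intro q
    refine (card_lt_abs_sub_le q M ht htμ).trans ?_
    rw [exp_neg]
    gcongr
  have hunion : #{ω : MGOutcome n M | ¬ (muMax (mgGraph ω) : ℝ) - muMin (mgGraph ω)
        ≤ 14 * √((M : ℝ) * log n / (n : ℝ) ^ 2)}
      ≤ ∑ q, #{ω : MGOutcome n M | t < |(pairCount ω q : ℝ) - μ|} := by
    refine (card_le_card fun ω hω => ?_).trans card_biUnion_le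
    simp only [mem_filter, mem_univ, true_and, mem_biUnion] at hω ⊢
    by_contra! hgood
    exact hω ((muMax_sub_muMin_le hn (by positivity) hgood).trans_eq (by simp only [t]; ring))
  refine one_sub_le_mgProb hn ?_
  calc _ ≤ ∑ q, (#{ω : MGOutcome n M | t < |(pairCount ω q : ℝ) - μ|} : ℝ) := by
        exact_mod_cast hunion
    _ ≤ ∑ _q : NDPair n, 2 * ((n : ℝ) ^ 3)⁻¹ * N ^ M := sum_le_sum fun q _ => hsingle q
    _ = 2 * N / n ^ 3 * N ^ M := by rw [sum_const, card_univ, nsmul_eq_mul]; ring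
    _ ≤ 1 / n * N ^ M := by
        gcongr ?_ * _
        rw [div_le_div_iff₀ (by positivity) (by positivity)]
        nlinarith

end GS

open GS Filter

/-- **Corollary.** If `m = ω(n² log n)`, then w.h.p. `M ~ M(n, m)` satisfies
`μ(M) - μ_min(M) = O(√(m log n / n²))`. -/
theorem random_multigraph_multiplicity_gap (m : ℕ → ℕ)
    (hm : Tendsto (fun n : ℕ => (m n : ℝ) / ((n : ℝ) ^ 2 * Real.log n)) atTop atTop) :
    ∃ C : ℝ, Tendsto (fun n => mgProb n (m n) (fun ω =>
        (muMax (mgGraph ω) : ℝ) - (muMin (mgGraph ω) : ℝ)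
          ≤ C * Real.sqrt ((m n : ℝ) * Real.log n / (n : ℝ) ^ 2)))
      atTop (nhds 1) := by
  refine ⟨14, tendsto_of_tendsto_of_tendsto_of_le_of_le' (g := fun n : ℕ => 1 - 1 / (n : ℝ))
    ?_ tendsto_const_nhds ?_ (Eventually.of_forall fun n => mgProb_le_one _ _ _)⟩
  · simpa using tendsto_const_nhds.sub (tendsto_one_div_atTop_nhds_zero_nat (𝕜 := ℝ))
  filter_upwards [eventually_ge_atTop 2, hm.eventually_ge_atTop 4] with n hn hmn
  have hlog : 0 < Real.log n := Real.log_pos (by exact_mod_cast hn)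
  exact one_sub_inv_le_mgProb_gap hn ((le_div_iff₀ (by positivity)).1 hmn)
end

section
/- Let n ≥ 5 and m be integers, let M ~ M(n, m), let r be a positive integer, let e_1, …, e_r be distinct unordered pairs of distinct vertices from [n], and let k_1, …, k_r be nonnegative integers. Then Pr[ μ(e_i) ≥ k_i for all i ∈ [r] ] ≤ (5·e·m/n²)^{k_1 + … + k_r}, where e is Euler's constant. -/
open Finset Filter Asymptotics

open GS Filter

/-- **Claim.** Let `n ≥ 5`, let `M ~ M(n, m)`, let `e₁, …, e_r` be distinct
unordered pairs of distinct vertices and `k₁, …, k_r` nonnegative integers.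
Then `Pr[μ(eᵢ) ≥ kᵢ for all i] ≤ (5 e m / n²)^{k₁ + … + k_r}`. -/
theorem random_multigraph_edge_set_bound (n m : ℕ) (hn : 5 ≤ n)
    (r : ℕ) (hr : 1 ≤ r)
    (e : Fin r → NDPair n) (he : Function.Injective e)
    (kv : Fin r → ℕ) :
    mgProb n m (fun ω => ∀ i : Fin r, kv i ≤ pairCount ω (e i))
      ≤ (5 * Real.exp 1 * (m : ℝ) / (n : ℝ) ^ 2) ^ (∑ i, kv i) := by
  classical
  have hn0 : (0:ℝ) < n := by
    have : (5:ℝ) ≤ n := by exact_mod_cast hn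
    linarith
  set K := ∑ i, kv i with hK
  set N := Fintype.card (NDPair n) with hNdef
  have hNchoose : N = n.choose 2 := by
    rw [hNdef]
    rw [Sym2.card_subtype_not_diag]
    simp
  have hNpos : 0 < N := by
    rw [hNchoose]
    exact Nat.choose_pos (by omega)
  have hbase : (0:ℝ) ≤ 5 * Real.exp 1 * (m:ℝ) / (n:ℝ) ^ 2 := by positivity
  set P : MGOutcome n m → Prop := fun ω => ∀ i : Fin r, kv i ≤ pairCount ω (e i) with hP
  set A : Finset (MGOutcome n m) := Finset.univ.filter P with hA
  have hcard_sub : Nat.card {ω : MGOutcome n m // P ω} = A.card := by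
    rw [Nat.card_eq_fintype_card, Fintype.card_subtype]
  have htot : Nat.card (MGOutcome n m) = N ^ m := by
    rw [Nat.card_eq_fintype_card]
    simp [hNdef]
  have hprob : mgProb n m P = (A.card : ℝ) / (N : ℝ) ^ m := by
    rw [mgProb, hcard_sub, htot]
    push_cast
    ring
  rcases A.eq_empty_or_nonempty with hAe | ⟨ω₀, hω₀⟩
  · rw [hprob, hAe]
    simp only [Finset.card_empty, Nat.cast_zero, zero_div]
    positivity
  · -- filter sets
    set fs : MGOutcome n m → Fin r → Finset (Fin m) :=
      fun ω i => Finset.univ.filter (fun j => ω j = e i) with hfs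
    have hfs_card : ∀ ω i, (fs ω i).card = pairCount ω (e i) := fun ω i => rfl
    have hfs_disj : ∀ ω (i i' : Fin r), i ≠ i' → Disjoint (fs ω i) (fs ω i') := by
      intro ω i i' hne
      rw [Finset.disjoint_left]
      intro j hj hj'
      simp only [hfs, Finset.mem_filter] at hj hj'
      exact hne (he (hj.2 ▸ hj'.2 ▸ rfl))
    have hω₀P : P ω₀ := (Finset.mem_filter.1 hω₀).2
    have hKm : K ≤ m := by
      have h1 : K ≤ ∑ i, (fs ω₀ i).card := by
        apply Finset.sum_le_sum
        intro i _
        rw [hfs_card]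
        exact hω₀P i
      have h2 : ∑ i, (fs ω₀ i).card = (Finset.univ.biUnion (fs ω₀)).card := by
        rw [Finset.card_biUnion (fun i _ i' _ h => hfs_disj ω₀ i i' h)]
      calc K ≤ (Finset.univ.biUnion (fs ω₀)).card := h1.trans h2.le
        _ ≤ (Finset.univ : Finset (Fin m)).card := Finset.card_le_card (Finset.subset_univ _)
        _ = m := Finset.card_univ.trans (Fintype.card_fin m)
    -- selection function
    have hSfun : ∀ ω : MGOutcome n m, ∃ S : Fin r → Finset (Fin m),
        P ω → ∀ i, S i ⊆ fs ω i ∧ (S i).card = kv i := by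
      intro ω
      by_cases hω : P ω
      · have : ∀ i, ∃ t ⊆ fs ω i, t.card = kv i := by
          intro i
          exact Finset.exists_subset_card_eq ((hfs_card ω i) ▸ hω i)
        choose S hS1 hS2 using this
        exact ⟨S, fun _ i => ⟨hS1 i, hS2 i⟩⟩
      · exact ⟨fun _ => ∅, fun h => absurd h hω⟩
    choose Sfun hSfun_spec using hSfun
    set T : Finset (Fin r → Finset (Fin m)) :=
      Fintype.piFinset (fun i => (Finset.univ : Finset (Fin m)).powersetCard (kv i)) with hT
    have hmaps : ∀ ω ∈ A, Sfun ω ∈ T := by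
      intro ω hω
      have hωP : P ω := (Finset.mem_filter.1 hω).2
      rw [hT, Fintype.mem_piFinset]
      intro i
      rw [Finset.mem_powersetCard]
      exact ⟨Finset.subset_univ _, (hSfun_spec ω hωP i).2⟩
    have hfiber : ∀ S ∈ T, (A.filter fun ω => Sfun ω = S).card ≤ N ^ (m - K) := by
      intro S hS
      rcases (A.filter fun ω => Sfun ω = S).eq_empty_or_nonempty with hFe | ⟨ω₁, hω₁⟩
      · rw [hFe]; simp
      · have hω₁A : ω₁ ∈ A := (Finset.mem_filter.1 hω₁).1
        have hω₁P : P ω₁ := (Finset.mem_filter.1 hω₁A).2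
        have hω₁S : Sfun ω₁ = S := (Finset.mem_filter.1 hω₁).2
        have hScard : ∀ i, (S i).card = kv i := by
          intro i
          rw [← hω₁S]
          exact (hSfun_spec ω₁ hω₁P i).2
        have hSdisj : ∀ (i i' : Fin r), i ≠ i' → Disjoint (S i) (S i') := by
          intro i i' hne
          have h1 : S i ⊆ fs ω₁ i := hω₁S ▸ (hSfun_spec ω₁ hω₁P i).1
          have h2 : S i' ⊆ fs ω₁ i' := hω₁S ▸ (hSfun_spec ω₁ hω₁P i').1
          exact (hfs_disj ω₁ i i' hne).mono h1 h2
        set U : Finset (Fin m) := Finset.univ.biUnion S with hU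
        have hUcard : U.card = K := by
          rw [hU, Finset.card_biUnion (fun i _ i' _ h => hSdisj i i' h)]
          rw [hK]
          exact Finset.sum_congr rfl (fun i _ => hScard i)
        -- the key fact: members of the fiber are determined by values outside U
        have hdet : ∀ ω, ω ∈ A.filter (fun ω => Sfun ω = S) → ∀ j ∈ U, ∃ i, ω j = e i ∧ j ∈ S i := by
          intro ω hω j hj
          obtain ⟨i, _, hji⟩ := Finset.mem_biUnion.1 hj
          have hωP : P ω := (Finset.mem_filter.1 (Finset.mem_filter.1 hω).1).2
          have hωS : Sfun ω = S := (Finset.mem_filter.1 hω).2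
          have hsub : S i ⊆ fs ω i := hωS ▸ (hSfun_spec ω hωP i).1
          have := hsub hji
          rw [hfs, Finset.mem_filter] at this
          exact ⟨i, this.2, hji⟩
        have hinj : Set.InjOn (fun (ω : MGOutcome n m) => fun j : {j : Fin m // j ∉ U} => ω j.1)
            (A.filter fun ω => Sfun ω = S) := by
          intro ω hω ω' hω' hfeq
          funext j
          by_cases hj : j ∈ U
          · obtain ⟨i, hωj, hji⟩ := hdet ω hω j hj
            obtain ⟨i', hω'j, hji'⟩ := hdet ω' hω' j hj
            have : i = i' := by
              by_contra hne
              exact (Finset.disjoint_left.1 (hSdisj i i' hne)) hji hji'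
            rw [hωj, hω'j, this]
          · exact congrFun hfeq ⟨j, hj⟩
        calc (A.filter fun ω => Sfun ω = S).card
            ≤ (Finset.univ : Finset ({j : Fin m // j ∉ U} → NDPair n)).card :=
              Finset.card_le_card_of_injOn _ (fun _ _ => Finset.mem_univ _) hinj
          _ = N ^ (m - K) := by
              rw [Finset.card_univ, Fintype.card_fun]
              congr 1
              rw [Fintype.card_subtype_compl, Fintype.card_fin]
              congr 1
              rw [← hUcard]
              exact Fintype.card_coe U
    have hTcard : T.card ≤ m ^ K := by
      rw [hT, Fintype.card_piFinset]
      calc ∏ i, ((Finset.univ : Finset (Fin m)).powersetCard (kv i)).card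
          = ∏ i, (m.choose (kv i)) := by
            refine Finset.prod_congr rfl (fun i _ => ?_)
            rw [Finset.card_powersetCard, Finset.card_univ, Fintype.card_fin]
        _ ≤ ∏ i, m ^ (kv i) := Finset.prod_le_prod' (fun i _ => Nat.choose_le_pow m (kv i))
        _ = m ^ K := by rw [hK, Finset.prod_pow_eq_pow_sum]
    have hAcard : A.card ≤ m ^ K * N ^ (m - K) := by
      calc A.card = ∑ S ∈ T, (A.filter fun ω => Sfun ω = S).card :=
            Finset.card_eq_sum_card_fiberwise hmaps
        _ ≤ ∑ _S ∈ T, N ^ (m - K) := Finset.sum_le_sum hfiber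
        _ = T.card * N ^ (m - K) := by rw [Finset.sum_const, smul_eq_mul]
        _ ≤ m ^ K * N ^ (m - K) := Nat.mul_le_mul_right _ hTcard
    -- real arithmetic
    rw [hprob]
    have hNR : (0:ℝ) < (N:ℝ) := by exact_mod_cast hNpos
    have step1 : (A.card : ℝ) / (N:ℝ) ^ m ≤ ((m:ℝ) / (N:ℝ)) ^ K := by
      rw [div_le_iff₀ (by positivity), div_pow, div_mul_eq_mul_div, le_div_iff₀ (by positivity)]
      have hsplit : (N:ℝ) ^ m = (N:ℝ) ^ K * (N:ℝ) ^ (m - K) := by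
        rw [← pow_add]
        congr 1
        omega
      calc (A.card : ℝ) * (N:ℝ) ^ K ≤ ((m:ℝ) ^ K * (N:ℝ) ^ (m - K)) * (N:ℝ) ^ K := by
            apply mul_le_mul_of_nonneg_right _ (by positivity)
            exact_mod_cast hAcard
        _ = (m:ℝ) ^ K * (N:ℝ) ^ m := by rw [hsplit]; ring
    refine step1.trans (pow_le_pow_left₀ (by positivity) ?_ K)
    -- m / N ≤ 5 e m / n²
    have hNn : (n:ℝ) ^ 2 ≤ 5 * (N:ℝ) := by
      have : (N:ℝ) = (n:ℝ) * ((n:ℝ) - 1) / 2 := by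
        rw [hNchoose, Nat.cast_choose_two]
      rw [this]
      have h5 : (5:ℝ) ≤ n := by exact_mod_cast hn
      nlinarith
    have he1 : (1:ℝ) ≤ Real.exp 1 := by
      have := Real.add_one_le_exp (1:ℝ)
      linarith
    rw [div_le_div_iff₀ hNR (by positivity)]
    have hm0 : (0:ℝ) ≤ m := by positivity
    calc (m:ℝ) * (n:ℝ)^2 ≤ (m:ℝ) * (5 * (N:ℝ)) := by
          exact mul_le_mul_of_nonneg_left hNn hm0
      _ ≤ (m:ℝ) * (5 * Real.exp 1 * (N:ℝ)) := by
          apply mul_le_mul_of_nonneg_left _ hm0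
          nlinarith [mul_le_mul_of_nonneg_right he1 hNR.le]
      _ = 5 * Real.exp 1 * (m:ℝ) * (N:ℝ) := by ring
end
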